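/- arXiv:2403.13475 — 5 statements merged into one kernel-verified Lean document; each statement's English description precedes it below -/
import Mathlib

section
/- Let f: [0,∞) → [0,∞) be convex, increasing, with f(0)=0, and let (X,d,ν) satisfy ν(X) = +∞ and C_{f,a} f(r) ≤ ν(B(x,r)) ≤ C_{f,A} f(r) for all x, r. Then for all p ∈ [1,∞) and u ∈ L^p(X,ν): 2 C_{f,a} ‖u‖_{L^p}^p ≤ [ (u(x)-u(y))/f(d(x,y))^{1/p} ]^p_{L^p_w(X×X,ν⊗ν)} ≤ 2^{p+1} C_{f,A} ‖u‖_{L^p}^p. -/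
set_option linter.unusedSectionVars false

open MeasureTheory Metric Filter Topology
open scoped ENNReal NNReal

section Aux

variable {X : Type*} [MetricSpace X] [SecondCountableTopology X]
  [MeasurableSpace X] [BorelSpace X]

lemma aux_convex_bound {f : ℝ → ℝ} (hconv : ConvexOn ℝ (Set.Ici 0) f)
    (hf0 : f 0 = 0) {t c : ℝ} (ht0 : 0 ≤ t) (ht1 : t ≤ 1) (hc : 0 ≤ c) :
    f (t * c) ≤ t * f c := by
  have := hconv.2 (Set.self_mem_Ici) (Set.mem_Ici.mpr hc)
    (sub_nonneg.mpr ht1) ht0 (by ring)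
  simpa [hf0, smul_eq_mul] using this

lemma aux_f_pos (ν : Measure X) (hX : ν Set.univ = ⊤)
    {f : ℝ → ℝ} (hfnn : ∀ r : ℝ, 0 ≤ r → 0 ≤ f r) {C_fA : ℝ}
    (hregA : ∀ (x : X) (r : ℝ), 0 < r → ν (ball x r) ≤ ENNReal.ofReal (C_fA * f r))
    {s : ℝ} (hs : 0 < s) : 0 < f s := by
  rcases lt_or_ge 0 (f s) with h | h
  · exact h
  have hfs : f s = 0 := le_antisymm h (hfnn s hs.le)
  have hball : ∀ x : X, ν (ball x s) = 0 := by
    intro x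
    have := hregA x s hs
    simpa [hfs] using this
  obtain ⟨D, hDc, hDd⟩ := TopologicalSpace.exists_countable_dense X
  have hcover : (Set.univ : Set X) ⊆ ⋃ d ∈ D, ball d s := by
    intro x _
    obtain ⟨d, hd1, hd2⟩ := Metric.dense_iff.mp hDd x s hs
    exact Set.mem_biUnion hd2 (by simpa [dist_comm] using hd1)
  have h0 : ν Set.univ = 0 := by
    refine le_antisymm ?_ zero_le
    refine (measure_mono hcover).trans ?_
    refine (measure_biUnion_le ν hDc _).trans ?_
    simp [hball]
  rw [hX] at h0
  exact absurd h0 (by simp)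

lemma aux_f_strictMono {f : ℝ → ℝ} (hconv : ConvexOn ℝ (Set.Ici 0) f)
    (hf0 : f 0 = 0) (hfpos : ∀ s : ℝ, 0 < s → 0 < f s) :
    StrictMonoOn f (Set.Ici 0) := by
  intro a ha b hb hab
  have hb0 : 0 < b := lt_of_le_of_lt ha hab
  have hab' : a / b < 1 := (div_lt_one hb0).mpr hab
  have h1 : f a ≤ (a / b) * f b := by
    have := aux_convex_bound hconv hf0 (div_nonneg ha hb0.le) hab'.le hb0.le
    rwa [div_mul_cancel₀ _ hb0.ne'] at this
  calc f a ≤ (a / b) * f b := h1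
    _ < 1 * f b := mul_lt_mul_of_pos_right hab' (hfpos b hb0)
    _ = f b := one_mul _

lemma aux_f_contOn {f : ℝ → ℝ} (hconv : ConvexOn ℝ (Set.Ici 0) f)
    (hf0 : f 0 = 0) (hfnn : ∀ r : ℝ, 0 ≤ r → 0 ≤ f r) :
    ContinuousOn f (Set.Ici 0) := by
  have hIoi : ContinuousOn f (Set.Ioi 0) :=
    (hconv.subset Set.Ioi_subset_Ici_self (convex_Ioi 0)).continuousOn isOpen_Ioi
  intro x hx
  rcases eq_or_lt_of_le (Set.mem_Ici.mp hx : (0:ℝ) ≤ x) with h0 | h0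
  · have h0' : x = 0 := h0.symm
    subst h0'
    unfold ContinuousWithinAt
    rw [hf0]
    have hev : ∀ᶠ t in 𝓝[Set.Ici 0] (0:ℝ), t ∈ Set.Icc (0:ℝ) 1 := by
      filter_upwards [eventually_mem_nhdsWithin,
        eventually_nhdsWithin_of_eventually_nhds (eventually_le_nhds one_pos)] with t h1 h2
      exact ⟨h1, h2⟩
    have hub : ∀ᶠ t in 𝓝[Set.Ici 0] (0:ℝ), f t ≤ t * f 1 := by
      filter_upwards [hev] with t ht
      have := aux_convex_bound hconv hf0 ht.1 ht.2 zero_le_one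
      simpa using this
    have hlb : ∀ᶠ t in 𝓝[Set.Ici 0] (0:ℝ), 0 ≤ f t := by
      filter_upwards [eventually_mem_nhdsWithin] with t ht
      exact hfnn t ht
    have htend : Tendsto (fun t : ℝ => t * f 1) (𝓝[Set.Ici 0] (0:ℝ)) (𝓝 0) := by
      have : Tendsto (fun t : ℝ => t * f 1) (𝓝 (0:ℝ)) (𝓝 (0 * f 1)) :=
        (continuous_id.mul continuous_const).tendsto 0
      simpa using this.mono_left nhdsWithin_le_nhds
    exact squeeze_zero' hlb hub htend
  · exact (hIoi.continuousAt (isOpen_Ioi.mem_nhds h0)).continuousWithinAt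

lemma aux_f_surj {f : ℝ → ℝ} (hconv : ConvexOn ℝ (Set.Ici 0) f)
    (hf0 : f 0 = 0) (hfnn : ∀ r : ℝ, 0 ≤ r → 0 ≤ f r)
    (hf1 : 0 < f 1) {t : ℝ} (ht : 0 ≤ t) :
    ∃ r : ℝ, 0 ≤ r ∧ f r = t := by
  set c : ℝ := max 1 (t / f 1) with hc
  have hc1 : (1:ℝ) ≤ c := le_max_left _ _
  have hc0 : 0 < c := lt_of_lt_of_le one_pos hc1
  have hfc : t ≤ f c := by
    have h1 : f 1 ≤ (1 / c) * f c := by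
      have := aux_convex_bound hconv hf0 (by positivity : (0:ℝ) ≤ 1/c)
        (by rw [div_le_one hc0]; exact hc1) (le_trans zero_le_one hc1)
      rw [one_div, inv_mul_cancel₀ hc0.ne'] at this
      rwa [one_div]
    have h2 : c * f 1 ≤ f c := by
      rw [one_div] at h1
      calc c * f 1 ≤ c * (c⁻¹ * f c) := by
            exact mul_le_mul_of_nonneg_left h1 hc0.le
        _ = f c := by field_simp
    calc t = (t / f 1) * f 1 := by field_simp
      _ ≤ c * f 1 := mul_le_mul_of_nonneg_right (le_max_right _ _) hf1.le
      _ ≤ f c := h2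
  have hIVT := intermediate_value_Icc hc0.le
    ((aux_f_contOn hconv hf0 hfnn).mono (Set.Icc_subset_Ici_self))
  have : t ∈ Set.Icc (f 0) (f c) := by
    rw [hf0]; exact ⟨ht, hfc⟩
  obtain ⟨r, hr, hfr⟩ := hIVT this
  exact ⟨r, hr.1, hfr⟩

end Aux
section Aux2

variable {X : Type*} [MetricSpace X] [SecondCountableTopology X]
  [MeasurableSpace X] [BorelSpace X]

/-- Key upper estimate: the measure of a sublevel set of `f ∘ dist` is at most `C_fA * t`. -/
lemma aux_meas_f_le (ν : Measure X) (hX : ν Set.univ = ⊤)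
    {f : ℝ → ℝ} (hconv : ConvexOn ℝ (Set.Ici 0) f)
    (hf0 : f 0 = 0) (hfnn : ∀ r : ℝ, 0 ≤ r → 0 ≤ f r)
    {C_fA : ℝ} (hCfA : 0 < C_fA)
    (hregA : ∀ (x : X) (r : ℝ), 0 < r → ν (ball x r) ≤ ENNReal.ofReal (C_fA * f r))
    (x : X) {t : ℝ} (ht : 0 ≤ t) :
    ν {y : X | f (dist x y) ≤ t} ≤ ENNReal.ofReal (C_fA * t) := by
  have hfpos : ∀ s : ℝ, 0 < s → 0 < f s := fun s hs => aux_f_pos ν hX hfnn hregA hs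
  have hsm : StrictMonoOn f (Set.Ici 0) := aux_f_strictMono hconv hf0 hfpos
  obtain ⟨r, hr0, hfr⟩ := aux_f_surj hconv hf0 hfnn (hfpos 1 one_pos) ht
  have hset : {y : X | f (dist x y) ≤ t} = closedBall x r := by
    ext y
    simp only [Set.mem_setOf_eq, mem_closedBall, dist_comm y x]
    rw [← hfr]
    exact hsm.le_iff_le (Set.mem_Ici.mpr dist_nonneg) (Set.mem_Ici.mpr hr0)
  rw [hset]
  refine ENNReal.le_of_forall_pos_le_add ?_
  intro ε hε _
  have hε' : (0:ℝ) < (ε : ℝ) / C_fA := by positivity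
  -- find z > r with f z < t + ε / C_fA
  have hcw : ContinuousWithinAt f (Set.Ici 0) r :=
    aux_f_contOn hconv hf0 hfnn r (Set.mem_Ici.mpr hr0)
  have hlt : f r < t + (ε : ℝ) / C_fA := by rw [hfr]; linarith
  have hev : ∀ᶠ z in 𝓝[Set.Ici 0] r, f z < t + (ε : ℝ) / C_fA :=
    hcw.eventually_lt_const hlt
  have hmono : 𝓝[Set.Ioi r] r ≤ 𝓝[Set.Ici 0] r :=
    nhdsWithin_mono r (fun z hz => le_trans hr0 (le_of_lt hz))
  obtain ⟨z, hz1, hz2⟩ := ((hev.filter_mono hmono).and eventually_mem_nhdsWithin).exists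
  have hzr : r < z := hz2
  have hz0 : 0 < z := lt_of_le_of_lt hr0 hzr
  calc ν (closedBall x r) ≤ ν (ball x z) := measure_mono (closedBall_subset_ball hzr)
    _ ≤ ENNReal.ofReal (C_fA * f z) := hregA x z hz0
    _ ≤ ENNReal.ofReal (C_fA * (t + (ε : ℝ) / C_fA)) := by
        exact ENNReal.ofReal_le_ofReal (mul_le_mul_of_nonneg_left hz1.le hCfA.le)
    _ = ENNReal.ofReal (C_fA * t) + ε := by
        rw [mul_add, ENNReal.ofReal_add (by positivity) (by positivity)]
        congr 1
        rw [mul_div_cancel₀ _ hCfA.ne']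
        exact ENNReal.ofReal_coe_nnreal

/-- Key lower estimate packaging: a ball with `f r = t` and lower mass bound. -/
lemma aux_ball_lower (ν : Measure X) (hX : ν Set.univ = ⊤)
    {f : ℝ → ℝ} (hconv : ConvexOn ℝ (Set.Ici 0) f)
    (hmono : MonotoneOn f (Set.Ici 0))
    (hf0 : f 0 = 0) (hfnn : ∀ r : ℝ, 0 ≤ r → 0 ≤ f r)
    {C_fa C_fA : ℝ} (hCfa : 0 < C_fa)
    (hreg : ∀ (x : X) (r : ℝ), 0 < r →
      ENNReal.ofReal (C_fa * f r) ≤ ν (ball x r) ∧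
        ν (ball x r) ≤ ENNReal.ofReal (C_fA * f r))
    (x : X) {t : ℝ} (ht : 0 < t) :
    ∃ r : ℝ, 0 < r ∧ (∀ y ∈ ball x r, f (dist x y) ≤ t) ∧
      ENNReal.ofReal (C_fa * t) ≤ ν (ball x r) := by
  have hfpos : ∀ s : ℝ, 0 < s → 0 < f s := fun s hs =>
    aux_f_pos ν hX hfnn (fun x r hr => (hreg x r hr).2) hs
  obtain ⟨r, hr0, hfr⟩ := aux_f_surj hconv hf0 hfnn (hfpos 1 one_pos) ht.le
  have hrpos : 0 < r := by
    rcases eq_or_lt_of_le hr0 with h | h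
    · exfalso; rw [← h, hf0] at hfr; exact ht.ne hfr
    · exact h
  refine ⟨r, hrpos, ?_, ?_⟩
  · intro y hy
    have : f (dist x y) ≤ f r :=
      hmono (Set.mem_Ici.mpr dist_nonneg) (Set.mem_Ici.mpr hr0)
        (le_of_lt (by rwa [mem_ball, dist_comm] at hy))
    rwa [hfr] at this
  · rw [← hfr]; exact (hreg x r hrpos).1

end Aux2
section Key

variable {X : Type*} [MetricSpace X] [SecondCountableTopology X]
  [MeasurableSpace X] [BorelSpace X]

lemma weak_MS_key
    (ν : Measure X) [SigmaFinite ν]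
    (hX : ν Set.univ = ⊤)
    (f : ℝ → ℝ) (hconv : ConvexOn ℝ (Set.Ici 0) f) (hmono : MonotoneOn f (Set.Ici 0))
    (hf0 : f 0 = 0) (hfnn : ∀ r : ℝ, 0 ≤ r → 0 ≤ f r)
    (C_fa C_fA : ℝ) (hCfa : 0 < C_fa) (hCfA : 0 < C_fA)
    (hreg : ∀ (x : X) (r : ℝ), 0 < r →
      ENNReal.ofReal (C_fa * f r) ≤ ν (ball x r) ∧
        ν (ball x r) ≤ ENNReal.ofReal (C_fA * f r))
    (p : ℝ) (hp : 1 ≤ p) (u : X → ℝ) (hum : Measurable u)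
    (hI : ∫⁻ x, ENNReal.ofReal (|u x| ^ p) ∂ν ≠ ⊤) :
    ENNReal.ofReal (2 * C_fa) * ∫⁻ x, ENNReal.ofReal (|u x| ^ p) ∂ν ≤
      (⨆ lam > (0 : ℝ), ENNReal.ofReal (lam ^ p) *
        (ν.prod ν) {q : X × X | lam * f (dist q.1 q.2) ^ (1 / p) ≤ |u q.1 - u q.2|}) ∧
    (⨆ lam > (0 : ℝ), ENNReal.ofReal (lam ^ p) *
        (ν.prod ν) {q : X × X | lam * f (dist q.1 q.2) ^ (1 / p) ≤ |u q.1 - u q.2|}) ≤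
      ENNReal.ofReal ((2 : ℝ) ^ (p + 1) * C_fA) *
        ∫⁻ x, ENNReal.ofReal (|u x| ^ p) ∂ν := by
  have hp0 : 0 < p := lt_of_lt_of_le one_pos hp
  set I : ℝ≥0∞ := ∫⁻ x, ENNReal.ofReal (|u x| ^ p) ∂ν with hIdef
  have hregA : ∀ (x : X) (r : ℝ), 0 < r → ν (ball x r) ≤ ENNReal.ofReal (C_fA * f r) :=
    fun x r hr => (hreg x r hr).2
  -- monotone (hence measurable) extension of f
  set g : ℝ → ℝ := fun t => f (max t 0) with hgdef
  have hgmono : Monotone g := by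
    intro s t hst
    exact hmono (Set.mem_Ici.mpr (le_max_right s 0)) (Set.mem_Ici.mpr (le_max_right t 0))
      (max_le_max hst (le_refl 0))
  have hgm : Measurable g := hgmono.measurable
  have hfd : ∀ q : X × X, f (dist q.1 q.2) = g (dist q.1 q.2) := by
    intro q; simp [hgdef, max_eq_left dist_nonneg]
  -- the sets S lam are measurable
  set S : ℝ → Set (X × X) :=
    fun lam => {q : X × X | lam * f (dist q.1 q.2) ^ (1 / p) ≤ |u q.1 - u q.2|} with hSdef
  have hSm : ∀ lam : ℝ, MeasurableSet (S lam) := by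
    intro lam
    have : S lam = {q : X × X | lam * g (dist q.1 q.2) ^ (1 / p) ≤ |u q.1 - u q.2|} := by
      ext q; simp only [hSdef, Set.mem_setOf_eq, hfd q]
    rw [this]
    exact measurableSet_le
      (((hgm.comp measurable_dist).pow_const _).const_mul lam)
      (((hum.comp measurable_fst).sub (hum.comp measurable_snd)).abs)
  have humI : Measurable fun x => ENNReal.ofReal (|u x| ^ p) :=
    (hum.abs.pow_const p).ennreal_ofReal
  -- UPPER BOUND
  have upper : ∀ lam : ℝ, 0 < lam →
      ENNReal.ofReal (lam ^ p) * (ν.prod ν) (S lam) ≤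
        ENNReal.ofReal ((2 : ℝ) ^ (p + 1) * C_fA) * I := by
    intro lam hlam
    set S1 : Set (X × X) := {q : X × X | f (dist q.1 q.2) ≤ (2 * |u q.1| / lam) ^ p} with hS1def
    set S2 : Set (X × X) := {q : X × X | f (dist q.1 q.2) ≤ (2 * |u q.2| / lam) ^ p} with hS2def
    have hcond : ∀ (a : ℝ) (d : ℝ), 0 ≤ d →
        (lam * f d ^ (1 / p) ≤ 2 * |a| ↔ f d ≤ (2 * |a| / lam) ^ p) := by
      intro a d hd
      rw [mul_comm lam, ← le_div_iff₀ hlam, one_div,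
        Real.rpow_inv_le_iff_of_pos (hfnn d hd) (by positivity) hp0]
    have hsub : S lam ⊆ S1 ∪ S2 := by
      intro q hq
      have h1 : lam * f (dist q.1 q.2) ^ (1 / p) ≤ |u q.1 - u q.2| := hq
      have h2 : |u q.1 - u q.2| ≤ |u q.1| + |u q.2| := abs_sub _ _
      by_cases hc : lam * f (dist q.1 q.2) ^ (1 / p) ≤ 2 * |u q.1|
      · exact Or.inl ((hcond (u q.1) _ dist_nonneg).mp hc)
      · push_neg at hc
        have : lam * f (dist q.1 q.2) ^ (1 / p) ≤ 2 * |u q.2| := by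
          nlinarith [abs_nonneg (u q.1), abs_nonneg (u q.2)]
        exact Or.inr ((hcond (u q.2) _ dist_nonneg).mp this)
    have hS1m : MeasurableSet S1 := by
      have : S1 = {q : X × X | g (dist q.1 q.2) ≤ (2 * |u q.1| / lam) ^ p} := by
        ext q; simp only [hS1def, Set.mem_setOf_eq, hfd q]
      rw [this]
      exact measurableSet_le (hgm.comp measurable_dist)
        (((((hum.comp measurable_fst).abs).const_mul 2).div_const lam).pow_const p)
    have hS2m : MeasurableSet S2 := by
      have : S2 = {q : X × X | g (dist q.1 q.2) ≤ (2 * |u q.2| / lam) ^ p} := by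
        ext q; simp only [hS2def, Set.mem_setOf_eq, hfd q]
      rw [this]
      exact measurableSet_le (hgm.comp measurable_dist)
        (((((hum.comp measurable_snd).abs).const_mul 2).div_const lam).pow_const p)
    have hslice : ∀ a : ℝ, ENNReal.ofReal (C_fA * (2 * |a| / lam) ^ p) =
        ENNReal.ofReal (C_fA * (2 / lam) ^ p) * ENNReal.ofReal (|a| ^ p) := by
      intro a
      rw [← ENNReal.ofReal_mul (by positivity)]
      congr 1
      rw [mul_assoc]
      congr 1
      rw [← Real.mul_rpow (by positivity) (abs_nonneg a)]
      congr 1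
      ring
    have hbound1 : (ν.prod ν) S1 ≤ ENNReal.ofReal (C_fA * (2 / lam) ^ p) * I := by
      rw [Measure.prod_apply hS1m]
      have : ∀ x : X, ν (Prod.mk x ⁻¹' S1) ≤
          ENNReal.ofReal (C_fA * (2 / lam) ^ p) * ENNReal.ofReal (|u x| ^ p) := by
        intro x
        have hpre : Prod.mk x ⁻¹' S1 = {y : X | f (dist x y) ≤ (2 * |u x| / lam) ^ p} := rfl
        rw [hpre, ← hslice (u x)]
        exact aux_meas_f_le ν hX hconv hf0 hfnn hCfA hregA x (by positivity)
      calc (∫⁻ x, ν (Prod.mk x ⁻¹' S1) ∂ν)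
          ≤ ∫⁻ x, ENNReal.ofReal (C_fA * (2 / lam) ^ p) * ENNReal.ofReal (|u x| ^ p) ∂ν :=
            lintegral_mono this
        _ = ENNReal.ofReal (C_fA * (2 / lam) ^ p) * I := lintegral_const_mul _ humI
    have hbound2 : (ν.prod ν) S2 ≤ ENNReal.ofReal (C_fA * (2 / lam) ^ p) * I := by
      rw [Measure.prod_apply_symm hS2m]
      have : ∀ y : X, ν ((fun x => (x, y)) ⁻¹' S2) ≤
          ENNReal.ofReal (C_fA * (2 / lam) ^ p) * ENNReal.ofReal (|u y| ^ p) := by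
        intro y
        have hpre : (fun x => (x, y)) ⁻¹' S2 = {x : X | f (dist y x) ≤ (2 * |u y| / lam) ^ p} := by
          ext x; simp only [Set.mem_preimage, hS2def, Set.mem_setOf_eq, dist_comm x y]
        rw [hpre, ← hslice (u y)]
        exact aux_meas_f_le ν hX hconv hf0 hfnn hCfA hregA y (by positivity)
      calc (∫⁻ y, ν ((fun x => (x, y)) ⁻¹' S2) ∂ν)
          ≤ ∫⁻ y, ENNReal.ofReal (C_fA * (2 / lam) ^ p) * ENNReal.ofReal (|u y| ^ p) ∂ν :=
            lintegral_mono this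
        _ = ENNReal.ofReal (C_fA * (2 / lam) ^ p) * I := lintegral_const_mul _ humI
    have hmeas : (ν.prod ν) (S lam) ≤ 2 * (ENNReal.ofReal (C_fA * (2 / lam) ^ p) * I) := by
      calc (ν.prod ν) (S lam) ≤ (ν.prod ν) (S1 ∪ S2) := measure_mono hsub
        _ ≤ (ν.prod ν) S1 + (ν.prod ν) S2 := measure_union_le _ _
        _ ≤ ENNReal.ofReal (C_fA * (2 / lam) ^ p) * I +
            ENNReal.ofReal (C_fA * (2 / lam) ^ p) * I := add_le_add hbound1 hbound2
        _ = 2 * (ENNReal.ofReal (C_fA * (2 / lam) ^ p) * I) := by ring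
    calc ENNReal.ofReal (lam ^ p) * (ν.prod ν) (S lam)
        ≤ ENNReal.ofReal (lam ^ p) * (2 * (ENNReal.ofReal (C_fA * (2 / lam) ^ p) * I)) :=
          mul_le_mul_right hmeas _
      _ = (ENNReal.ofReal (lam ^ p) * 2 * ENNReal.ofReal (C_fA * (2 / lam) ^ p)) * I := by ring
      _ = ENNReal.ofReal ((2 : ℝ) ^ (p + 1) * C_fA) * I := by
          congr 1
          rw [show (2 : ℝ≥0∞) = ENNReal.ofReal (2 : ℝ) by simp,
            ← ENNReal.ofReal_mul (by positivity), ← ENNReal.ofReal_mul (by positivity)]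
          congr 1
          have h2 : (2 : ℝ) ^ (p + 1) = 2 ^ p * 2 := by
            rw [Real.rpow_add two_pos, Real.rpow_one]
          have hd : (2 / lam : ℝ) ^ p = 2 ^ p / lam ^ p := Real.div_rpow (by norm_num : (0:ℝ) ≤ 2) hlam.le p
          have hlp : (0:ℝ) < lam ^ p := Real.rpow_pos_of_pos hlam p
          rw [hd, h2, show lam ^ p * 2 * (C_fA * (2 ^ p / lam ^ p)) =
            (lam ^ p / lam ^ p) * (2 ^ p * 2 * C_fA) by ring, div_self hlp.ne', one_mul]
  have hupper : (⨆ lam > (0 : ℝ), ENNReal.ofReal (lam ^ p) * (ν.prod ν) (S lam)) ≤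
      ENNReal.ofReal ((2 : ℝ) ^ (p + 1) * C_fA) * I :=
    iSup₂_le fun lam hlam => upper lam hlam
  -- LOWER BOUND
  -- Markov inequality: superlevel sets of |u| have finite measure
  have hMarkov : ∀ ε : ℝ, 0 < ε → ν {x : X | ε < |u x|} ≠ ⊤ := by
    intro ε hε
    have hsub : {x : X | ε < |u x|} ⊆
        {x : X | ENNReal.ofReal (ε ^ p) ≤ ENNReal.ofReal (|u x| ^ p)} := by
      intro x hx
      exact ENNReal.ofReal_le_ofReal (Real.rpow_le_rpow hε.le (le_of_lt hx) hp0.le)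
    have h1 : ENNReal.ofReal (ε ^ p) * ν {x : X | ε < |u x|} ≤ I := by
      calc ENNReal.ofReal (ε ^ p) * ν {x | ε < |u x|}
          ≤ ENNReal.ofReal (ε ^ p) *
              ν {x | ENNReal.ofReal (ε ^ p) ≤ ENNReal.ofReal (|u x| ^ p)} :=
            mul_le_mul_right (measure_mono hsub) _
        _ ≤ I := mul_meas_ge_le_lintegral₀ humI.aemeasurable _
    intro hM
    rw [hM, ENNReal.mul_top
      (ENNReal.ofReal_pos.mpr (Real.rpow_pos_of_pos hε p)).ne'] at h1
    exact hI (top_le_iff.mp h1)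
  have lower_eps : ∀ ε : ℝ, 0 < ε →
      2 * ∫⁻ x in {x : X | ε < |u x|}, ENNReal.ofReal (C_fa * (|u x| - ε) ^ p) ∂ν ≤
        ⨆ lam > (0:ℝ), ENNReal.ofReal (lam ^ p) * (ν.prod ν) (S lam) := by
    intro ε hε
    set T : Set X := {x : X | ε < |u x|} with hTdef
    have hTm : MeasurableSet T := measurableSet_lt measurable_const hum.abs
    set M : ℝ≥0∞ := ν T with hMdef
    have hM : M ≠ ⊤ := hMarkov ε hε
    set J : ℝ≥0∞ := ∫⁻ x in T, ENNReal.ofReal (C_fa * (|u x| - ε) ^ p) ∂ν with hJdef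
    -- core estimate for each lam
    have core : ∀ lam : ℝ, 0 < lam →
        2 * J ≤ ENNReal.ofReal (lam ^ p) * (ν.prod ν) (S lam) +
          2 * (ENNReal.ofReal (lam ^ p) * (M * M)) := by
      intro lam hlam
      set k : ℝ≥0∞ := ENNReal.ofReal (lam ^ p) with hkdef
      -- the good slice set around a center z ∈ T
      have hgen : ∀ z : X, z ∈ T →
          ENNReal.ofReal (C_fa * ((|u z| - ε) / lam) ^ p) - M ≤
            ν {y : X | lam * f (dist z y) ^ (1 / p) ≤ |u z| - ε ∧ |u y| ≤ ε} := by
        intro z hz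
        have hz' : ε < |u z| := hz
        have ht : (0:ℝ) < ((|u z| - ε) / lam) ^ p :=
          Real.rpow_pos_of_pos (div_pos (by linarith) hlam) p
        obtain ⟨r, hr0, hrf, hrm⟩ := aux_ball_lower ν hX hconv hmono hf0 hfnn hCfa hreg z ht
        have hsub2 : ball z r ∩ {y : X | |u y| ≤ ε} ⊆
            {y : X | lam * f (dist z y) ^ (1 / p) ≤ |u z| - ε ∧ |u y| ≤ ε} := by
          rintro y ⟨hy1, hy2⟩
          refine ⟨?_, hy2⟩
          have h1 : f (dist z y) ≤ ((|u z| - ε) / lam) ^ p := hrf y hy1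
          have h2 : f (dist z y) ^ (1 / p) ≤ (((|u z| - ε) / lam) ^ p) ^ (1 / p) :=
            Real.rpow_le_rpow (hfnn _ dist_nonneg) h1 (by positivity)
          rw [one_div, Real.rpow_rpow_inv (div_nonneg (by linarith) hlam.le) hp0.ne'] at h2
          calc lam * f (dist z y) ^ (1 / p) ≤ lam * ((|u z| - ε) / lam) := by
                rw [one_div]
                exact mul_le_mul_of_nonneg_left h2 hlam.le
            _ = |u z| - ε := by field_simp
        have hball : ν (ball z r) ≤ ν (ball z r ∩ {y : X | |u y| ≤ ε}) + M := by
          refine le_trans (measure_mono ?_) (measure_union_le _ _)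
          intro y hy
          rcases le_or_gt (|u y|) ε with h | h
          · exact Or.inl ⟨hy, h⟩
          · exact Or.inr h
        have : ENNReal.ofReal (C_fa * ((|u z| - ε) / lam) ^ p) ≤
            ν (ball z r ∩ {y : X | |u y| ≤ ε}) + M := le_trans hrm hball
        exact le_trans (tsub_le_iff_right.mpr this) (measure_mono hsub2)
      -- the sets A and B
      set A : Set (X × X) := S lam ∩ {q : X × X | |u q.2| ≤ ε} with hAdef
      set B : Set (X × X) := S lam ∩ {q : X × X | |u q.1| ≤ ε ∧ ε < |u q.2|} with hBdef
      have hAm : MeasurableSet A :=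
        (hSm lam).inter (measurableSet_le (hum.comp measurable_snd).abs measurable_const)
      have hBm : MeasurableSet B :=
        (hSm lam).inter ((measurableSet_le (hum.comp measurable_fst).abs
          measurable_const).inter (measurableSet_lt measurable_const
            (hum.comp measurable_snd).abs))
      have hdisj : Disjoint A B := by
        rw [Set.disjoint_left]
        rintro q ⟨_, hq2⟩ ⟨_, _, hq4⟩
        exact absurd hq2 (not_le.mpr hq4)
      set c : X → ℝ≥0∞ := fun x => ENNReal.ofReal (C_fa * ((|u x| - ε) / lam) ^ p)
        with hcdef
      set D : ℝ≥0∞ := ∫⁻ x in T, (c x - M) ∂ν with hDdef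
      have hAbound : D ≤ (ν.prod ν) A := by
        rw [Measure.prod_apply hAm]
        refine le_trans ?_ (setLIntegral_le_lintegral T _)
        refine setLIntegral_mono (measurable_measure_prodMk_left hAm) ?_
        intro x hx
        refine le_trans (hgen x hx) (measure_mono ?_)
        rintro y ⟨hy1, hy2⟩
        have hz' : ε < |u x| := hx
        refine ⟨?_, hy2⟩
        show lam * f (dist x y) ^ (1 / p) ≤ |u x - u y|
        calc lam * f (dist x y) ^ (1 / p) ≤ |u x| - ε := hy1
          _ ≤ |u x| - |u y| := by linarith
          _ ≤ |u x - u y| := abs_sub_abs_le_abs_sub _ _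
      have hBbound : D ≤ (ν.prod ν) B := by
        rw [Measure.prod_apply_symm hBm]
        refine le_trans ?_ (setLIntegral_le_lintegral T _)
        refine setLIntegral_mono (measurable_measure_prodMk_right hBm) ?_
        intro y hy
        refine le_trans (hgen y hy) (measure_mono ?_)
        rintro x ⟨hx1, hx2⟩
        have hz' : ε < |u y| := hy
        refine ⟨?_, hx2, hz'⟩
        show lam * f (dist x y) ^ (1 / p) ≤ |u x - u y|
        rw [dist_comm x y]
        calc lam * f (dist y x) ^ (1 / p) ≤ |u y| - ε := hx1
          _ ≤ |u y| - |u x| := by linarith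
          _ ≤ |u y - u x| := abs_sub_abs_le_abs_sub _ _
          _ = |u x - u y| := abs_sub_comm _ _
      have hSAB : D + D ≤ (ν.prod ν) (S lam) := by
        calc D + D ≤ (ν.prod ν) A + (ν.prod ν) B := add_le_add hAbound hBbound
          _ = (ν.prod ν) (A ∪ B) := (measure_union hdisj hBm).symm
          _ ≤ (ν.prod ν) (S lam) := measure_mono (by
              rintro q (⟨hq, _⟩ | ⟨hq, _⟩) <;> exact hq)
      -- pull the constant k inside and compare with J
      have hkD : J - k * (M * M) ≤ k * D := by
        have hpoint : ∀ x, x ∈ T →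
            ENNReal.ofReal (C_fa * (|u x| - ε) ^ p) - k * M ≤ k * (c x - M) := by
          intro x hx
          have hz' : ε < |u x| := hx
          have hkc : k * c x = ENNReal.ofReal (C_fa * (|u x| - ε) ^ p) := by
            rw [hkdef, hcdef, ← ENNReal.ofReal_mul (by positivity)]
            congr 1
            have hd : ((|u x| - ε) / lam) ^ p = (|u x| - ε) ^ p / lam ^ p :=
              Real.div_rpow (by linarith) hlam.le p
            have hlp : (0:ℝ) < lam ^ p := Real.rpow_pos_of_pos hlam p
            rw [hd, show lam ^ p * (C_fa * ((|u x| - ε) ^ p / lam ^ p)) =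
              (lam ^ p / lam ^ p) * (C_fa * (|u x| - ε) ^ p) by ring, div_self hlp.ne', one_mul]
          rw [← hkc]
          calc k * c x - k * M ≤ k * (c x - M) := by
                rw [tsub_le_iff_right, ← mul_add]
                exact mul_le_mul_right le_tsub_add k
            _ = k * (c x - M) := rfl
        have h2 : ∫⁻ x in T, (ENNReal.ofReal (C_fa * (|u x| - ε) ^ p) - k * M) ∂ν ≤
            ∫⁻ x in T, k * (c x - M) ∂ν := by
          refine setLIntegral_mono ?_ hpoint
          have hcm : Measurable c :=
            (((hum.abs.sub_const ε).div_const lam).pow_const p).const_mul C_fa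
              |>.ennreal_ofReal
          exact (hcm.sub measurable_const).const_mul k
        have h3 : J ≤ (∫⁻ x in T, (ENNReal.ofReal (C_fa * (|u x| - ε) ^ p) - k * M) ∂ν)
            + k * M * M := by
          calc J ≤ ∫⁻ x in T,
                ((ENNReal.ofReal (C_fa * (|u x| - ε) ^ p) - k * M) + k * M) ∂ν := by
                refine lintegral_mono fun x => ?_
                exact le_tsub_add
            _ = (∫⁻ x in T, (ENNReal.ofReal (C_fa * (|u x| - ε) ^ p) - k * M) ∂ν)
                + (k * M) * ν T := by
                rw [lintegral_add_right _ measurable_const, setLIntegral_const]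
            _ = _ := by rw [hMdef]
        have h4 : ∫⁻ x in T, k * (c x - M) ∂ν = k * D := by
          rw [hDdef]
          exact lintegral_const_mul' k _ ENNReal.ofReal_ne_top
        rw [tsub_le_iff_right]
        calc J ≤ (∫⁻ x in T, (ENNReal.ofReal (C_fa * (|u x| - ε) ^ p) - k * M) ∂ν)
              + k * M * M := h3
          _ ≤ (∫⁻ x in T, k * (c x - M) ∂ν) + k * M * M := add_le_add_left h2 _
          _ = k * D + k * (M * M) := by rw [h4, mul_assoc]
      -- conclude
      calc 2 * J ≤ 2 * ((k * D) + k * (M * M)) := by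
            refine mul_le_mul_right ?_ 2
            calc J ≤ (J - k * (M * M)) + k * (M * M) := le_tsub_add
              _ ≤ k * D + k * (M * M) := add_le_add_left hkD _
        _ = (k * D + k * D) + 2 * (k * (M * M)) := by ring
        _ ≤ k * (ν.prod ν) (S lam) + 2 * (k * (M * M)) := by
            refine add_le_add_left ?_ _
            rw [← mul_add]
            exact mul_le_mul_right hSAB k
    -- let lam → 0 along 1/(n+1)
    have hpos : ∀ n : ℕ, (0:ℝ) < 1 / (n + 1) := by
      intro n; positivity
    have hseq : ∀ n : ℕ, 2 * J ≤
        (⨆ lam > (0:ℝ), ENNReal.ofReal (lam ^ p) * (ν.prod ν) (S lam)) +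
          2 * (ENNReal.ofReal ((1 / ((n:ℝ) + 1)) ^ p) * (M * M)) := by
      intro n
      refine le_trans (core _ (hpos n)) (add_le_add_left ?_ _)
      exact le_iSup₂ (f := fun lam (_ : lam > (0:ℝ)) =>
        ENNReal.ofReal (lam ^ p) * (ν.prod ν) (S lam)) (1 / ((n:ℝ) + 1)) (hpos n)
    have htend0 : Tendsto (fun n : ℕ =>
        2 * (ENNReal.ofReal ((1 / ((n:ℝ) + 1)) ^ p) * (M * M))) atTop (𝓝 0) := by
      have h1 : Tendsto (fun n : ℕ => (1 / ((n:ℝ) + 1)) ^ p) atTop (𝓝 0) := by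
        have h0 : Tendsto (fun n : ℕ => 1 / ((n:ℝ) + 1)) atTop (𝓝 0) :=
          tendsto_one_div_add_atTop_nhds_zero_nat
        have hc : ContinuousAt (fun t : ℝ => t ^ p) 0 :=
          Real.continuousAt_rpow_const 0 p (Or.inr hp0.le)
        have := hc.tendsto.comp h0
        simpa [Real.zero_rpow hp0.ne', Function.comp_def] using this
      have h2 : Tendsto (fun n : ℕ => ENNReal.ofReal ((1 / ((n:ℝ) + 1)) ^ p))
          atTop (𝓝 0) := by
        have := (ENNReal.continuous_ofReal.tendsto 0).comp h1
        simpa [Function.comp_def] using this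
      have h3 : Tendsto (fun n : ℕ =>
          ENNReal.ofReal ((1 / ((n:ℝ) + 1)) ^ p) * (2 * (M * M))) atTop (𝓝 0) := by
        have := ENNReal.Tendsto.mul_const h2
          (Or.inr (by finiteness : 2 * (M * M) ≠ ⊤))
        simpa using this
      refine h3.congr fun n => by ring
    have htend : Tendsto (fun n : ℕ =>
        (⨆ lam > (0:ℝ), ENNReal.ofReal (lam ^ p) * (ν.prod ν) (S lam)) +
          2 * (ENNReal.ofReal ((1 / ((n:ℝ) + 1)) ^ p) * (M * M))) atTop
        (𝓝 ((⨆ lam > (0:ℝ), ENNReal.ofReal (lam ^ p) * (ν.prod ν) (S lam)) + 0)) :=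
      tendsto_const_nhds.add htend0
    have := ge_of_tendsto' htend hseq
    simpa using this
  -- monotone convergence in ε
  have hpos' : ∀ n : ℕ, (0:ℝ) < 1 / ((n:ℝ) + 1) := by intro n; positivity
  set F : ℕ → X → ℝ≥0∞ := fun n x =>
    Set.indicator {x : X | 1 / ((n:ℝ) + 1) < |u x|}
      (fun x => ENNReal.ofReal (C_fa * (|u x| - 1 / ((n:ℝ) + 1)) ^ p)) x with hFdef
  have hsetm : ∀ n : ℕ, MeasurableSet {x : X | 1 / ((n:ℝ) + 1) < |u x|} :=
    fun n => measurableSet_lt measurable_const hum.abs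
  have hFm : ∀ n : ℕ, Measurable (F n) := by
    intro n
    exact (((hum.abs.sub_const _).pow_const p).const_mul C_fa).ennreal_ofReal.indicator
      (hsetm n)
  have hmono_inv : ∀ {n m : ℕ}, n ≤ m → 1 / ((m:ℝ) + 1) ≤ 1 / ((n:ℝ) + 1) := by
    intro n m hnm
    have h : ((n:ℝ)) + 1 ≤ (m:ℝ) + 1 := by
      have : (n:ℝ) ≤ (m:ℝ) := by exact_mod_cast hnm
      linarith
    exact one_div_le_one_div_of_le (by positivity) h
  have hFmono : Monotone F := by
    intro n m hnm x
    simp only [hFdef, Set.indicator]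
    split_ifs with h1 h2
    · simp only [Set.mem_setOf_eq] at h1
      have h3 := hmono_inv hnm
      exact ENNReal.ofReal_le_ofReal (mul_le_mul_of_nonneg_left
        (Real.rpow_le_rpow (by linarith) (by linarith) hp0.le) hCfa.le)
    · exfalso
      simp only [Set.mem_setOf_eq] at h1 h2
      exact h2 (lt_of_le_of_lt (hmono_inv hnm) h1)
    · exact zero_le
    · exact le_refl _
  have hFsup : ∀ x : X, (⨆ n, F n x) = ENNReal.ofReal (C_fa * |u x| ^ p) := by
    intro x
    rcases eq_or_lt_of_le (abs_nonneg (u x)) with h | h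
    · have : ∀ n, F n x = 0 := by
        intro n
        simp only [hFdef, Set.indicator]
        rw [if_neg]
        simp only [Set.mem_setOf_eq, ← h]
        exact not_lt.mpr (hpos' n).le
      simp only [this, ← h, Real.zero_rpow hp0.ne', mul_zero, ENNReal.ofReal_zero,
        iSup_const]
    · have hlim : Tendsto (fun n => F n x) atTop
          (𝓝 (ENNReal.ofReal (C_fa * |u x| ^ p))) := by
        have hev : ∀ᶠ n : ℕ in atTop, F n x =
            ENNReal.ofReal (C_fa * (|u x| - 1 / ((n:ℝ) + 1)) ^ p) := by
          have := tendsto_one_div_add_atTop_nhds_zero_nat.eventually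
            (eventually_lt_nhds h)
          filter_upwards [this] with n hn
          simp only [hFdef]
          rw [Set.indicator_of_mem]
          exact hn
        have h1 : Tendsto (fun n : ℕ => |u x| - 1 / ((n:ℝ) + 1)) atTop (𝓝 (|u x|)) := by
          have := tendsto_one_div_add_atTop_nhds_zero_nat.const_sub (|u x|)
          simpa using this
        have h2 : Tendsto (fun n : ℕ => (|u x| - 1 / ((n:ℝ) + 1)) ^ p) atTop
            (𝓝 (|u x| ^ p)) :=
          ((Real.continuousAt_rpow_const _ p (Or.inr hp0.le)).tendsto).comp h1
        have h3 : Tendsto (fun n : ℕ =>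
            ENNReal.ofReal (C_fa * (|u x| - 1 / ((n:ℝ) + 1)) ^ p)) atTop
            (𝓝 (ENNReal.ofReal (C_fa * |u x| ^ p))) :=
          (ENNReal.continuous_ofReal.tendsto _).comp (h2.const_mul C_fa)
        exact Tendsto.congr' (hev.mono fun n h => h.symm) h3
      exact tendsto_nhds_unique (tendsto_atTop_iSup fun n m hnm => hFmono hnm x) hlim
  have hlower : ENNReal.ofReal (2 * C_fa) * I ≤
      ⨆ lam > (0:ℝ), ENNReal.ofReal (lam ^ p) * (ν.prod ν) (S lam) := by
    have hIeq : ENNReal.ofReal (2 * C_fa) * I = ⨆ n : ℕ, 2 * ∫⁻ x, F n x ∂ν := by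
      have e1 : ∫⁻ x, ENNReal.ofReal (C_fa * |u x| ^ p) ∂ν = ENNReal.ofReal C_fa * I := by
        rw [hIdef, ← lintegral_const_mul _ humI]
        refine lintegral_congr fun x => ?_
        rw [← ENNReal.ofReal_mul hCfa.le]
      calc ENNReal.ofReal (2 * C_fa) * I = 2 * (ENNReal.ofReal C_fa * I) := by
            rw [← mul_assoc, show (2:ℝ≥0∞) = ENNReal.ofReal 2 by simp,
              ← ENNReal.ofReal_mul (by norm_num)]
        _ = 2 * ∫⁻ x, ENNReal.ofReal (C_fa * |u x| ^ p) ∂ν := by rw [e1]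
        _ = 2 * ∫⁻ x, ⨆ n, F n x ∂ν := by rw [lintegral_congr hFsup]
        _ = 2 * ⨆ n, ∫⁻ x, F n x ∂ν := by rw [lintegral_iSup hFm hFmono]
        _ = ⨆ n : ℕ, 2 * ∫⁻ x, F n x ∂ν := ENNReal.mul_iSup _ _
    rw [hIeq]
    refine iSup_le fun n => ?_
    have := lower_eps (1 / ((n:ℝ) + 1)) (hpos' n)
    rwa [← lintegral_indicator (hsetm n)] at this
  exact ⟨hlower, hupper⟩

end Key
theorem weak_MS_bounds_f_Ahlfors
    {X : Type*} [MetricSpace X] [CompleteSpace X] [SecondCountableTopology X]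
    [MeasurableSpace X] [BorelSpace X]
    (ν : Measure X) [SigmaFinite ν]
    (hX : ν Set.univ = ⊤)
    (f : ℝ → ℝ) (hconv : ConvexOn ℝ (Set.Ici 0) f) (hmono : MonotoneOn f (Set.Ici 0))
    (hf0 : f 0 = 0) (hfnn : ∀ r : ℝ, 0 ≤ r → 0 ≤ f r)
    (C_fa C_fA : ℝ) (hCfa : 0 < C_fa) (hCfA : 0 < C_fA)
    (hreg : ∀ (x : X) (r : ℝ), 0 < r →
      ENNReal.ofReal (C_fa * f r) ≤ ν (ball x r) ∧
        ν (ball x r) ≤ ENNReal.ofReal (C_fA * f r))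
    (p : ℝ) (hp : 1 ≤ p) (u : X → ℝ) (hu : MemLp u (ENNReal.ofReal p) ν) :
    ENNReal.ofReal (2 * C_fa) * ∫⁻ x, ENNReal.ofReal (|u x| ^ p) ∂ν ≤
      (⨆ lam > (0 : ℝ), ENNReal.ofReal (lam ^ p) *
        (ν.prod ν) {q : X × X | lam * f (dist q.1 q.2) ^ (1 / p) ≤ |u q.1 - u q.2|}) ∧
    (⨆ lam > (0 : ℝ), ENNReal.ofReal (lam ^ p) *
        (ν.prod ν) {q : X × X | lam * f (dist q.1 q.2) ^ (1 / p) ≤ |u q.1 - u q.2|}) ≤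
      ENNReal.ofReal ((2 : ℝ) ^ (p + 1) * C_fA) *
        ∫⁻ x, ENNReal.ofReal (|u x| ^ p) ∂ν := by
  have hp0 : 0 < p := lt_of_lt_of_le one_pos hp
  set v : X → ℝ := hu.1.mk u with hvdef
  have hvm : Measurable v := hu.1.stronglyMeasurable_mk.measurable
  have huv : u =ᵐ[ν] v := hu.1.ae_eq_mk
  have hIeq : ∫⁻ x, ENNReal.ofReal (|u x| ^ p) ∂ν
      = ∫⁻ x, ENNReal.ofReal (|v x| ^ p) ∂ν :=
    lintegral_congr_ae (huv.mono fun x hx => by simp only [hx])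
  have hIfin : ∫⁻ x, ENNReal.ofReal (|u x| ^ p) ∂ν ≠ ⊤ := by
    have hne : ENNReal.ofReal p ≠ 0 := by
      simp only [ne_eq, ENNReal.ofReal_eq_zero, not_le]
      exact hp0
    have h2 := hu.2
    rw [eLpNorm_eq_lintegral_rpow_enorm_toReal hne ENNReal.ofReal_ne_top] at h2
    have htR : (ENNReal.ofReal p).toReal = p := ENNReal.toReal_ofReal hp0.le
    rw [htR] at h2
    have h3 : (∫⁻ x, ‖u x‖ₑ ^ p ∂ν) < ⊤ := by
      have := (ENNReal.rpow_lt_top_iff_of_pos (by positivity : (0:ℝ) < 1 / p)).mp h2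
      exact this
    have h4 : ∀ x : X, ENNReal.ofReal (|u x| ^ p) = ‖u x‖ₑ ^ p := by
      intro x
      rw [← ENNReal.ofReal_rpow_of_nonneg (abs_nonneg _) hp0.le, ← Real.norm_eq_abs,
        ofReal_norm]
    rw [lintegral_congr h4]
    exact h3.ne
  have hSeq : ∀ lam : ℝ,
      (ν.prod ν) {q : X × X | lam * f (dist q.1 q.2) ^ (1 / p) ≤ |u q.1 - u q.2|} =
      (ν.prod ν) {q : X × X | lam * f (dist q.1 q.2) ^ (1 / p) ≤ |v q.1 - v q.2|} := by
    intro lam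
    apply measure_congr
    have hTnull : ν (toMeasurable ν {x | u x ≠ v x}) = 0 := by
      rw [measure_toMeasurable]
      exact ae_iff.mp huv
    set N := toMeasurable ν {x | u x ≠ v x} with hNdef
    have hnull : (ν.prod ν) ((N ×ˢ Set.univ) ∪ (Set.univ ×ˢ N)) = 0 := by
      refine le_antisymm (le_trans (measure_union_le _ _) ?_) zero_le
      rw [Measure.prod_prod, Measure.prod_prod, hTnull]
      simp
    have hae : ∀ᵐ q ∂(ν.prod ν), q ∉ (N ×ˢ Set.univ) ∪ (Set.univ ×ˢ N) :=
      measure_eq_zero_iff_ae_notMem.mp hnull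
    refine Filter.eventuallyEq_set.mpr (hae.mono fun q hq => ?_)
    have h1 : u q.1 = v q.1 := by
      by_contra h
      exact hq (Or.inl ⟨subset_toMeasurable ν _ h, Set.mem_univ _⟩)
    have h2 : u q.2 = v q.2 := by
      by_contra h
      exact hq (Or.inr ⟨Set.mem_univ _, subset_toMeasurable ν _ h⟩)
    simp only [Set.mem_setOf_eq, h1, h2]
  have key := weak_MS_key ν hX f hconv hmono hf0 hfnn C_fa C_fA hCfa hCfA hreg p hp v hvm
    (by rw [← hIeq]; exact hIfin)
  have hsup : (⨆ lam > (0:ℝ), ENNReal.ofReal (lam ^ p) *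
        (ν.prod ν) {q : X × X | lam * f (dist q.1 q.2) ^ (1 / p) ≤ |u q.1 - u q.2|}) =
      (⨆ lam > (0:ℝ), ENNReal.ofReal (lam ^ p) *
        (ν.prod ν) {q : X × X | lam * f (dist q.1 q.2) ^ (1 / p) ≤ |v q.1 - v q.2|}) := by
    refine iSup_congr fun lam => iSup_congr fun _ => ?_
    rw [hSeq lam]
  rw [hIeq, hsup]
  exact key
end

section
/- Let ν = (1+|x|)·L¹ on ℝ with the Euclidean distance, and let u_n = 1_{[n,n+1]}. Then for every p ∈ [1,∞) and s > 0, [ (u_n(x)-u_n(y))/|x-y|^{s/p} ]^p_{L^p_w(ℝ×ℝ, ν⊗ν)} ≥ n²/4, while ‖u_n‖_{L^p(ℝ,ν)}^p = n + 3/2. In particular no inequality [ (u(x)-u(y))/|x-y|^{s/p} ]^p_{L^p_w} ≤ c ‖u‖_{L^p(ν)}^p can hold uniformly for all u ∈ L^p(ℝ,ν). -/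
open MeasureTheory Metric Filter Topology

lemma weighted_meas_Ioc (a b : ℝ) (h0 : 0 ≤ a) (hab : a ≤ b) :
    (volume.withDensity fun t : ℝ => ENNReal.ofReal (1 + |t|)) (Set.Ioc a b)
      = ENNReal.ofReal ((b - a) + (b ^ 2 - a ^ 2) / 2) := by
  rw [withDensity_apply _ measurableSet_Ioc]
  have h1 : ∫⁻ t in Set.Ioc a b, ENNReal.ofReal (1 + |t|)
      = ∫⁻ t in Set.Ioc a b, ENNReal.ofReal (1 + t) := by
    refine setLIntegral_congr_fun measurableSet_Ioc ?_
    intro x hx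
    beta_reduce
    rw [abs_of_nonneg (le_trans h0 hx.1.le)]
  rw [h1]
  have hint : IntegrableOn (fun t : ℝ => 1 + t) (Set.Ioc a b) volume :=
    (continuous_const.add continuous_id).integrableOn_Ioc
  rw [← ofReal_integral_eq_lintegral_ofReal hint
      ((ae_restrict_iff' measurableSet_Ioc).2 (Filter.Eventually.of_forall
        fun x hx => by have := hx.1; simp only [Pi.zero_apply]; linarith))]
  have h2 : ∫ t in Set.Ioc a b, (1 + t) = (b - a) + (b ^ 2 - a ^ 2) / 2 := by
    rw [← intervalIntegral.integral_of_le hab,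
      intervalIntegral.integral_add intervalIntegrable_const
        intervalIntegral.intervalIntegrable_id,
      intervalIntegral.integral_const, integral_id]
    simp
  rw [h2]

theorem weighted_line_no_uniform_upper_bound
    (p s : ℝ) (hp : 1 ≤ p) (hs : 0 < s) (n : ℕ) :
    ENNReal.ofReal ((n : ℝ) ^ 2 / 4) ≤
      (⨆ lam > (0 : ℝ), ENNReal.ofReal (lam ^ p) *
        ((volume.withDensity fun t : ℝ => ENNReal.ofReal (1 + |t|)).prod
          (volume.withDensity fun t : ℝ => ENNReal.ofReal (1 + |t|)))
          {q : ℝ × ℝ | lam * |q.1 - q.2| ^ (s / p) ≤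
            |Set.indicator (Set.Icc (n : ℝ) (n + 1)) (fun _ => (1 : ℝ)) q.1 -
             Set.indicator (Set.Icc (n : ℝ) (n + 1)) (fun _ => (1 : ℝ)) q.2|}) ∧
    (∫⁻ x, ENNReal.ofReal
        (|Set.indicator (Set.Icc (n : ℝ) (n + 1)) (fun _ => (1 : ℝ)) x| ^ p)
        ∂(volume.withDensity fun t : ℝ => ENNReal.ofReal (1 + |t|))) =
      ENNReal.ofReal ((n : ℝ) + 3 / 2) := by
  set μ := volume.withDensity fun t : ℝ => ENNReal.ofReal (1 + |t|) with hμ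
  have hn0 : (0 : ℝ) ≤ (n : ℝ) := Nat.cast_nonneg n
  constructor
  · -- Part 1: lower bound for the supremum, taking lam = 1
    refine le_trans ?_ (le_iSup₂ (f := fun lam (_ : lam > (0:ℝ)) =>
      ENNReal.ofReal (lam ^ p) * (μ.prod μ)
        {q : ℝ × ℝ | lam * |q.1 - q.2| ^ (s / p) ≤
          |Set.indicator (Set.Icc (n : ℝ) (n + 1)) (fun _ => (1 : ℝ)) q.1 -
           Set.indicator (Set.Icc (n : ℝ) (n + 1)) (fun _ => (1 : ℝ)) q.2|})
      (1 : ℝ) one_pos)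
    rw [Real.one_rpow, ENNReal.ofReal_one, one_mul]
    have hsub : (Set.Ioc ((n : ℝ) + 1/2) ((n : ℝ) + 1) ×ˢ
        Set.Ioc ((n : ℝ) + 1) ((n : ℝ) + 3/2)) ⊆
        {q : ℝ × ℝ | 1 * |q.1 - q.2| ^ (s / p) ≤
          |Set.indicator (Set.Icc (n : ℝ) (n + 1)) (fun _ => (1 : ℝ)) q.1 -
           Set.indicator (Set.Icc (n : ℝ) (n + 1)) (fun _ => (1 : ℝ)) q.2|} := by
      rintro ⟨x, y⟩ ⟨hx, hy⟩
      simp only [Set.mem_Ioc] at hx hy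
      have hx1 : x ∈ Set.Icc (n : ℝ) (n + 1) := ⟨by linarith [hx.1], hx.2⟩
      have hy1 : y ∉ Set.Icc (n : ℝ) (n + 1) := by
        simp only [Set.mem_Icc, not_and_or, not_le]
        right; linarith [hy.1]
      simp only [Set.mem_setOf_eq, Set.indicator_of_mem hx1, Set.indicator_of_notMem hy1,
        sub_zero, abs_one, one_mul]
      have habs : |x - y| ≤ 1 := by
        rw [abs_sub_comm, abs_of_pos (by linarith [hx.2, hy.1] : (0:ℝ) < y - x)]
        linarith [hx.1, hy.2]
      exact Real.rpow_le_one (abs_nonneg _) habs (div_nonneg hs.le (by linarith))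
    refine le_trans ?_ (measure_mono hsub)
    rw [Measure.prod_prod,
      weighted_meas_Ioc _ _ (by linarith) (by linarith),
      weighted_meas_Ioc _ _ (by linarith) (by linarith),
      ← ENNReal.ofReal_mul (by nlinarith)]
    apply ENNReal.ofReal_le_ofReal
    nlinarith [sq_nonneg ((n:ℝ))]
  · -- Part 2: the L^p norm
    have hfun : (fun x : ℝ => ENNReal.ofReal
        (|Set.indicator (Set.Icc (n : ℝ) (n + 1)) (fun _ => (1 : ℝ)) x| ^ p))
        = (Set.Icc (n : ℝ) (n + 1)).indicator (fun _ => (1 : ENNReal)) := by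
      funext x
      by_cases hx : x ∈ Set.Icc (n : ℝ) (n + 1)
      · rw [Set.indicator_of_mem hx, Set.indicator_of_mem hx, abs_one, Real.one_rpow,
          ENNReal.ofReal_one]
      · rw [Set.indicator_of_notMem hx, Set.indicator_of_notMem hx, abs_zero,
          Real.zero_rpow (by linarith : p ≠ 0), ENNReal.ofReal_zero]
    rw [hfun, lintegral_indicator measurableSet_Icc, setLIntegral_one]
    have hpt : μ {(n : ℝ)} = 0 :=
      withDensity_absolutelyContinuous _ _ (Real.volume_singleton)
    have hIcc : μ (Set.Icc (n : ℝ) (n + 1)) = μ (Set.Ioc (n : ℝ) (n + 1)) := by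
      apply le_antisymm
      · calc μ (Set.Icc (n : ℝ) (n + 1))
            ≤ μ ({(n : ℝ)} ∪ Set.Ioc (n : ℝ) (n + 1)) := by
              apply measure_mono
              intro x hx
              rcases eq_or_lt_of_le hx.1 with h | h
              · exact Or.inl (by simp [h.symm])
              · exact Or.inr ⟨h, hx.2⟩
          _ ≤ μ {(n : ℝ)} + μ (Set.Ioc (n : ℝ) (n + 1)) := measure_union_le _ _
          _ = μ (Set.Ioc (n : ℝ) (n + 1)) := by rw [hpt, zero_add]
      · exact measure_mono Set.Ioc_subset_Icc_self
    rw [hIcc, weighted_meas_Ioc _ _ hn0 (by linarith)]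
    congr 1
    ring
end

section
/- For the Euclidean space (ℝ^N, |·|, L^N) and any u ∈ L^p(ℝ^N), p ∈ [1,∞): 2ω_N ‖u‖_{L^p}^p ≤ sup_{λ>0} λ^p L^{2N}({(x,y) : |u(x)-u(y)| ≥ λ |x-y|^{N/p}}) ≤ 2^{p+1} ω_N ‖u‖_{L^p}^p, where ω_N is the Lebesgue measure of the unit ball. -/
set_option maxHeartbeats 1000000


open MeasureTheory Metric Filter Topology
open scoped ENNReal NNReal

theorem GuYung_euclidean_bounds
    (N : ℕ) (hN : 0 < N) (p : ℝ) (hp : 1 ≤ p)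
    (u : EuclideanSpace ℝ (Fin N) → ℝ) (hu : MemLp u (ENNReal.ofReal p) volume) :
    ENNReal.ofReal (2 * (volume (ball (0 : EuclideanSpace ℝ (Fin N)) 1)).toReal) *
        ∫⁻ x, ENNReal.ofReal (|u x| ^ p) ∂volume ≤
      (⨆ lam > (0 : ℝ), ENNReal.ofReal (lam ^ p) *
        (volume.prod volume)
          {q : EuclideanSpace ℝ (Fin N) × EuclideanSpace ℝ (Fin N) |
            lam * dist q.1 q.2 ^ ((N : ℝ) / p) ≤ |u q.1 - u q.2|}) ∧
    (⨆ lam > (0 : ℝ), ENNReal.ofReal (lam ^ p) *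
        (volume.prod volume)
          {q : EuclideanSpace ℝ (Fin N) × EuclideanSpace ℝ (Fin N) |
            lam * dist q.1 q.2 ^ ((N : ℝ) / p) ≤ |u q.1 - u q.2|}) ≤
      ENNReal.ofReal ((2 : ℝ) ^ (p + 1) *
          (volume (ball (0 : EuclideanSpace ℝ (Fin N)) 1)).toReal) *
        ∫⁻ x, ENNReal.ofReal (|u x| ^ p) ∂volume := by
  classical
  have hp0 : (0 : ℝ) < p := lt_of_lt_of_le one_pos hp
  have hpne : p ≠ 0 := ne_of_gt hp0
  have hNR : (0 : ℝ) < (N : ℝ) := by exact_mod_cast hN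
  have hNne : (N : ℝ) ≠ 0 := ne_of_gt hNR
  set ωN : ℝ≥0∞ := volume (ball (0 : EuclideanSpace ℝ (Fin N)) 1) with hωNdef
  have hω_fin : ωN ≠ ∞ := (measure_ball_lt_top).ne
  -- measurable representative
  have hmeas := hu.1
  set g : EuclideanSpace ℝ (Fin N) → ℝ := hmeas.mk u with hgdef
  have hg : Measurable g := hmeas.stronglyMeasurable_mk.measurable
  have hug : u =ᵐ[volume] g := hmeas.ae_eq_mk
  have hIfun : Measurable fun x => ENNReal.ofReal (|g x| ^ p) := by fun_prop
  set I : ℝ≥0∞ := ∫⁻ x, ENNReal.ofReal (|u x| ^ p) ∂volume with hIdef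
  have hIg : ∫⁻ x, ENNReal.ofReal (|g x| ^ p) ∂volume = I := by
    refine lintegral_congr_ae ?_
    filter_upwards [hug] with x hx
    rw [hx]
  have hIeq : ∀ x, ENNReal.ofReal (|u x| ^ p) = (‖u x‖₊ : ℝ≥0∞) ^ p := by
    intro x
    rw [show ((‖u x‖₊ : ℝ≥0∞)) = ENNReal.ofReal |u x| from by
        rw [← Real.norm_eq_abs, ofReal_norm, enorm_eq_nnnorm],
      ENNReal.ofReal_rpow_of_nonneg (abs_nonneg _) hp0.le]
  have hI_fin : I ≠ ∞ := by
    have h1 : ENNReal.ofReal p ≠ 0 := by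
      simp only [ne_eq, ENNReal.ofReal_eq_zero, not_le]; exact hp0
    have h2 : ENNReal.ofReal p ≠ ∞ := ENNReal.ofReal_ne_top
    have h3 := (eLpNorm_lt_top_iff_lintegral_rpow_enorm_lt_top h1 h2).mp hu.2
    rw [ENNReal.toReal_ofReal hp0.le] at h3
    refine ne_of_lt (lt_of_le_of_lt (le_of_eq ?_) h3)
    exact lintegral_congr fun x => hIeq x
  -- ball slice lemmas
  have hexp1 : (N : ℝ) / p * (p / (N : ℝ)) = 1 := by field_simp
  have hexp2 : p / (N : ℝ) * ((N : ℝ) / p) = 1 := by field_simp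
  have hball : ∀ (x : EuclideanSpace ℝ (Fin N)) (c : ℝ), 0 ≤ c →
      {y : EuclideanSpace ℝ (Fin N) | dist x y ^ ((N : ℝ) / p) ≤ c}
        = closedBall x (c ^ (p / (N : ℝ))) := by
    intro x c hc
    ext y
    simp only [Set.mem_setOf_eq, mem_closedBall, dist_comm y x]
    constructor
    · intro h
      have h2 := Real.rpow_le_rpow (Real.rpow_nonneg dist_nonneg _) h
        (by positivity : (0 : ℝ) ≤ p / (N : ℝ))
      rwa [← Real.rpow_mul dist_nonneg, hexp1, Real.rpow_one] at h2
    · intro h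
      have h2 := Real.rpow_le_rpow dist_nonneg h (by positivity : (0 : ℝ) ≤ (N : ℝ) / p)
      rwa [← Real.rpow_mul hc, hexp2, Real.rpow_one] at h2
  have hcB : ∀ (x : EuclideanSpace ℝ (Fin N)) (c : ℝ), 0 ≤ c →
      volume (closedBall x (c ^ (p / (N : ℝ)))) = ENNReal.ofReal (c ^ p) * ωN := by
    intro x c hc
    rw [Measure.addHaar_closedBall _ x (Real.rpow_nonneg hc _)]
    congr 2
    rw [finrank_euclideanSpace_fin, ← Real.rpow_natCast (c ^ (p / (N : ℝ))) N,
      ← Real.rpow_mul hc]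
    congr 1
    field_simp
  -- Markov
  have hM_fin : ∀ ε : ℝ, 0 < ε → volume {x | ε < |g x|} ≠ ∞ := by
    intro ε hε
    have hle : volume {x | ε < |g x|}
        ≤ volume {x | ENNReal.ofReal (ε ^ p) ≤ ENNReal.ofReal (|g x| ^ p)} := by
      refine measure_mono fun x hx => ?_
      exact ENNReal.ofReal_le_ofReal
        (Real.rpow_le_rpow hε.le (le_of_lt hx) hp0.le)
    have hb := mul_meas_ge_le_lintegral₀ (μ := volume)
      (f := fun x => ENNReal.ofReal (|g x| ^ p)) hIfun.aemeasurable (ENNReal.ofReal (ε ^ p))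
    rw [hIg] at hb
    intro htop
    rw [htop] at hle
    have htopS : volume {x | ENNReal.ofReal (ε ^ p) ≤ ENNReal.ofReal (|g x| ^ p)} = ∞ :=
      top_le_iff.mp hle
    have hεne : ENNReal.ofReal (ε ^ p) ≠ 0 := by
      simp only [ne_eq, ENNReal.ofReal_eq_zero, not_le]
      positivity
    rw [htopS, ENNReal.mul_top hεne] at hb
    exact hI_fin (top_le_iff.mp hb)
  -- null sets from a.e. equality
  set T : Set (EuclideanSpace ℝ (Fin N)) := {x | u x = g x} with hTdef
  have hTnull : volume Tᶜ = 0 := by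
    rw [hTdef, Set.compl_setOf]
    exact hug
  have hTTnull : (volume.prod volume) ((T ×ˢ T)ᶜ) = 0 := by
    have hsub : (T ×ˢ T)ᶜ ⊆ (Tᶜ ×ˢ (Set.univ : Set (EuclideanSpace ℝ (Fin N))))
        ∪ ((Set.univ : Set (EuclideanSpace ℝ (Fin N))) ×ˢ Tᶜ) := by
      intro q hq
      rw [Set.mem_compl_iff, Set.mem_prod] at hq
      by_cases h1 : q.1 ∈ T
      · exact Or.inr ⟨Set.mem_univ _, fun h2 => hq ⟨h1, h2⟩⟩
      · exact Or.inl ⟨h1, Set.mem_univ _⟩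
    refine le_antisymm (le_trans (measure_mono hsub) (le_trans (measure_union_le _ _) ?_))
      zero_le
    rw [Measure.prod_prod, Measure.prod_prod, hTnull, zero_mul, mul_zero, add_zero]
  have hcutnull : ∀ X : Set (EuclideanSpace ℝ (Fin N) × EuclideanSpace ℝ (Fin N)),
      (volume.prod volume) X ≤ (volume.prod volume) (X ∩ (T ×ˢ T)) := by
    intro X
    calc (volume.prod volume) X
        ≤ (volume.prod volume) ((X ∩ (T ×ˢ T)) ∪ (T ×ˢ T)ᶜ) := by
          refine measure_mono fun q hq => ?_
          by_cases h : q ∈ T ×ˢ T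
          · exact Or.inl ⟨hq, h⟩
          · exact Or.inr h
      _ ≤ (volume.prod volume) (X ∩ (T ×ˢ T)) + (volume.prod volume) ((T ×ˢ T)ᶜ) :=
          measure_union_le _ _
      _ = (volume.prod volume) (X ∩ (T ×ˢ T)) := by rw [hTTnull, add_zero]
  have hdistm : Measurable fun q : EuclideanSpace ℝ (Fin N) × EuclideanSpace ℝ (Fin N) =>
      dist q.1 q.2 ^ ((N : ℝ) / p) := by fun_prop
  constructor
  · -- LOWER BOUND
    -- reduce to showing the bound against any upper bound for the family
    have hmain : ∀ s : ℝ≥0∞,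
        (∀ lam : ℝ, 0 < lam → ENNReal.ofReal (lam ^ p) *
          (volume.prod volume)
            {q : EuclideanSpace ℝ (Fin N) × EuclideanSpace ℝ (Fin N) |
              lam * dist q.1 q.2 ^ ((N : ℝ) / p) ≤ |u q.1 - u q.2|} ≤ s) →
        ENNReal.ofReal (2 * ωN.toReal) * I ≤ s := by
      intro s hs
      have hmJ : ∀ ε : ℝ, Measurable fun x => ENNReal.ofReal (max (|g x| - ε) 0 ^ p) := by
        intro ε; fun_prop
      -- key inequality for each ε, lam
      have key : ∀ ε : ℝ, 0 < ε → ∀ lam : ℝ, 0 < lam →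
          2 * ωN * (∫⁻ x, ENNReal.ofReal (max (|g x| - ε) 0 ^ p) ∂volume)
            ≤ s + 2 * (volume {x | ε < |g x|}) ^ 2 * ENNReal.ofReal (lam ^ p) := by
        intro ε hε lam hlam
        set M : ℝ≥0∞ := volume {x | ε < |g x|} with hMdef
        set m : EuclideanSpace ℝ (Fin N) → ℝ := fun x => max (|g x| - ε) 0 with hmdef
        have hmnn : ∀ x, 0 ≤ m x := fun x => le_max_right _ _
        set S1 : Set (EuclideanSpace ℝ (Fin N) × EuclideanSpace ℝ (Fin N)) :=
          {q | |g q.2| ≤ ε ∧ ε < |g q.1| ∧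
            lam * dist q.1 q.2 ^ ((N : ℝ) / p) ≤ |g q.1| - ε} with hS1def
        have hg1 : Measurable fun q : EuclideanSpace ℝ (Fin N) × EuclideanSpace ℝ (Fin N) =>
            |g q.1| := (hg.comp measurable_fst).abs
        have hg2 : Measurable fun q : EuclideanSpace ℝ (Fin N) × EuclideanSpace ℝ (Fin N) =>
            |g q.2| := (hg.comp measurable_snd).abs
        have hS1m : MeasurableSet S1 := by
          refine MeasurableSet.inter ?_ (MeasurableSet.inter ?_ ?_)
          · exact measurableSet_le hg2 measurable_const
          · exact measurableSet_lt measurable_const hg1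
          · exact measurableSet_le (hdistm.const_mul lam) (hg1.sub measurable_const)
        -- slice inequality
        have hslice : ∀ x, ωN * ENNReal.ofReal ((m x / lam) ^ p)
            ≤ volume (Prod.mk x ⁻¹' S1)
              + Set.indicator {x | ε < |g x|} (fun _ => M) x := by
          intro x
          by_cases hx : ε < |g x|
          · have hmx : m x = |g x| - ε := max_eq_left (by linarith)
            have hanng : (0 : ℝ) ≤ (|g x| - ε) / lam := by
              have : (0:ℝ) ≤ |g x| - ε := by linarith
              positivity
            have hpre : Prod.mk x ⁻¹' S1
                = {y | |g y| ≤ ε} ∩ closedBall x ((((|g x| - ε) / lam)) ^ (p / (N : ℝ))) := by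
              rw [← hball x _ hanng]
              ext y
              simp only [Set.mem_preimage, hS1def, Set.mem_setOf_eq, Set.mem_inter_iff]
              constructor
              · rintro ⟨h1, _, h3⟩
                exact ⟨h1, (le_div_iff₀ hlam).mpr (by linarith [mul_comm lam (dist x y ^ ((N : ℝ) / p))])⟩
              · rintro ⟨h1, h2⟩
                refine ⟨h1, hx, ?_⟩
                have := (le_div_iff₀ hlam).mp h2
                linarith [mul_comm (dist x y ^ ((N : ℝ) / p)) lam]
            have hcover : closedBall x ((((|g x| - ε) / lam)) ^ (p / (N : ℝ)))
                ⊆ ({y | |g y| ≤ ε} ∩ closedBall x ((((|g x| - ε) / lam)) ^ (p / (N : ℝ))))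
                  ∪ {y | ε < |g y|} := by
              intro y hy
              by_cases h : |g y| ≤ ε
              · exact Or.inl ⟨h, hy⟩
              · exact Or.inr (lt_of_not_ge h)
            have hcb := hcB x _ hanng
            calc ωN * ENNReal.ofReal ((m x / lam) ^ p)
                = volume (closedBall x ((((|g x| - ε) / lam)) ^ (p / (N : ℝ)))) := by
                  rw [hcb, hmx, mul_comm]
              _ ≤ volume (({y | |g y| ≤ ε} ∩ closedBall x ((((|g x| - ε) / lam)) ^ (p / (N : ℝ))))
                    ∪ {y | ε < |g y|}) := measure_mono hcover
              _ ≤ volume ({y | |g y| ≤ ε} ∩ closedBall x ((((|g x| - ε) / lam)) ^ (p / (N : ℝ))))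
                    + volume {y | ε < |g y|} := measure_union_le _ _
              _ = volume (Prod.mk x ⁻¹' S1) + Set.indicator {x | ε < |g x|} (fun _ => M) x := by
                  rw [hpre, Set.indicator_of_mem (show x ∈ {x | ε < |g x|} from hx)]
          · have hmx : m x = 0 := max_eq_right (by push_neg at hx; linarith)
            rw [hmx, zero_div, Real.zero_rpow hpne, ENNReal.ofReal_zero, mul_zero]
            exact zero_le
        -- integrate the slice inequality
        have hintegral : ωN * (ENNReal.ofReal ((1 / lam) ^ p)
              * ∫⁻ x, ENNReal.ofReal (m x ^ p) ∂volume)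
            ≤ (volume.prod volume) S1 + M * M := by
          have hlhs : ∀ x, ωN * ENNReal.ofReal ((m x / lam) ^ p)
              = ωN * (ENNReal.ofReal ((1 / lam) ^ p) * ENNReal.ofReal (m x ^ p)) := by
            intro x
            congr 1
            rw [← ENNReal.ofReal_mul (by positivity), ← Real.mul_rpow (by positivity) (hmnn x)]
            congr 2
            field_simp
          have h1 : ∫⁻ x, ωN * ENNReal.ofReal ((m x / lam) ^ p) ∂volume
              ≤ ∫⁻ x, (volume (Prod.mk x ⁻¹' S1)
                + Set.indicator {x | ε < |g x|} (fun _ => M) x) ∂volume :=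
            lintegral_mono hslice
          rw [lintegral_add_left (measurable_measure_prodMk_left hS1m),
            ← Measure.prod_apply hS1m,
            lintegral_indicator (by exact measurableSet_lt measurable_const (by fun_prop)),
            setLIntegral_const] at h1
          calc ωN * (ENNReal.ofReal ((1 / lam) ^ p) * ∫⁻ x, ENNReal.ofReal (m x ^ p) ∂volume)
              = ∫⁻ x, ωN * ENNReal.ofReal ((m x / lam) ^ p) ∂volume := by
                simp_rw [hlhs]
                rw [lintegral_const_mul _ (by fun_prop), lintegral_const_mul _ (by fun_prop)]
            _ ≤ (volume.prod volume) S1 + M * volume {x | ε < |g x|} := h1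
            _ = (volume.prod volume) S1 + M * M := by rw [← hMdef]
        -- symmetric set
        set S2 : Set (EuclideanSpace ℝ (Fin N) × EuclideanSpace ℝ (Fin N)) :=
          Prod.swap ⁻¹' S1 with hS2def
        have hS2m : MeasurableSet S2 := hS1m.preimage measurable_swap
        have hμS2 : (volume.prod volume) S2 = (volume.prod volume) S1 := by
          rw [hS2def, ← Measure.map_apply measurable_swap hS1m, Measure.prod_swap]
        have hdisj : Disjoint S1 S2 := by
          rw [Set.disjoint_left]
          rintro ⟨x, y⟩ hq1 hq2
          have h1 : ε < |g x| := hq1.2.1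
          have h2 : |g x| ≤ ε := hq2.1
          linarith
        have hsubE : S1 ∪ S2 ⊆
            {q : EuclideanSpace ℝ (Fin N) × EuclideanSpace ℝ (Fin N) |
              lam * dist q.1 q.2 ^ ((N : ℝ) / p) ≤ |g q.1 - g q.2|} := by
          rintro ⟨x, y⟩ (⟨h1, h2, h3⟩ | ⟨h1, h2, h3⟩)
          · have : |g x| - |g y| ≤ |g x - g y| := abs_sub_abs_le_abs_sub _ _
            simp only [Set.mem_setOf_eq]
            linarith
          · simp only [Prod.fst_swap, Prod.snd_swap] at h1 h2 h3
            have : |g y| - |g x| ≤ |g y - g x| := abs_sub_abs_le_abs_sub _ _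
            simp only [Set.mem_setOf_eq]
            rw [abs_sub_comm]
            rw [dist_comm y x] at h3
            linarith
        have hEbound : (volume.prod volume) (S1 ∪ S2) ≤ (volume.prod volume)
            {q : EuclideanSpace ℝ (Fin N) × EuclideanSpace ℝ (Fin N) |
              lam * dist q.1 q.2 ^ ((N : ℝ) / p) ≤ |u q.1 - u q.2|} := by
          refine le_trans (hcutnull _) (measure_mono ?_)
          rintro ⟨x, y⟩ ⟨hq, hx, hy⟩
          have hxg : u x = g x := hx
          have hyg : u y = g y := hy
          have := hsubE hq
          simp only [Set.mem_setOf_eq] at this ⊢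
          rw [hxg, hyg]
          exact this
        have hunion : (volume.prod volume) (S1 ∪ S2) = 2 * (volume.prod volume) S1 := by
          rw [measure_union hdisj hS2m, hμS2, two_mul]
        -- combine
        have hcomb : 2 * (ωN * (ENNReal.ofReal ((1 / lam) ^ p)
              * ∫⁻ x, ENNReal.ofReal (m x ^ p) ∂volume))
            ≤ (volume.prod volume)
              {q : EuclideanSpace ℝ (Fin N) × EuclideanSpace ℝ (Fin N) |
                lam * dist q.1 q.2 ^ ((N : ℝ) / p) ≤ |u q.1 - u q.2|} + 2 * (M * M) := by
          calc 2 * (ωN * (ENNReal.ofReal ((1 / lam) ^ p)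
                * ∫⁻ x, ENNReal.ofReal (m x ^ p) ∂volume))
              ≤ 2 * ((volume.prod volume) S1 + M * M) := by
                exact mul_le_mul_right hintegral 2
            _ = 2 * (volume.prod volume) S1 + 2 * (M * M) := by ring
            _ = (volume.prod volume) (S1 ∪ S2) + 2 * (M * M) := by rw [hunion]
            _ ≤ _ + 2 * (M * M) := add_le_add_left hEbound _
        -- multiply by ofReal (lam ^ p)
        have hcancel : ENNReal.ofReal (lam ^ p) * ENNReal.ofReal ((1 / lam) ^ p) = 1 := by
          rw [← ENNReal.ofReal_mul (by positivity), ← Real.mul_rpow hlam.le (by positivity),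
            mul_one_div_cancel (ne_of_gt hlam), Real.one_rpow, ENNReal.ofReal_one]
        have hfinal := mul_le_mul_right hcomb (ENNReal.ofReal (lam ^ p))
        calc 2 * ωN * (∫⁻ x, ENNReal.ofReal (m x ^ p) ∂volume)
            = ENNReal.ofReal (lam ^ p) * (2 * (ωN * (ENNReal.ofReal ((1 / lam) ^ p)
                * ∫⁻ x, ENNReal.ofReal (m x ^ p) ∂volume))) := by
              rw [show ENNReal.ofReal (lam ^ p) * (2 * (ωN * (ENNReal.ofReal ((1 / lam) ^ p)
                  * ∫⁻ x, ENNReal.ofReal (m x ^ p) ∂volume)))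
                = (ENNReal.ofReal (lam ^ p) * ENNReal.ofReal ((1 / lam) ^ p))
                  * (2 * ωN * ∫⁻ x, ENNReal.ofReal (m x ^ p) ∂volume) from by ring, hcancel,
                one_mul]
          _ ≤ ENNReal.ofReal (lam ^ p) * ((volume.prod volume)
                {q : EuclideanSpace ℝ (Fin N) × EuclideanSpace ℝ (Fin N) |
                  lam * dist q.1 q.2 ^ ((N : ℝ) / p) ≤ |u q.1 - u q.2|} + 2 * (M * M)) := hfinal
          _ = ENNReal.ofReal (lam ^ p) * (volume.prod volume)
                {q : EuclideanSpace ℝ (Fin N) × EuclideanSpace ℝ (Fin N) |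
                  lam * dist q.1 q.2 ^ ((N : ℝ) / p) ≤ |u q.1 - u q.2|}
                + 2 * M ^ 2 * ENNReal.ofReal (lam ^ p) := by ring
          _ ≤ s + 2 * M ^ 2 * ENNReal.ofReal (lam ^ p) :=
              add_le_add_left (hs lam hlam) _
      -- take lam → 0
      have key2 : ∀ ε : ℝ, 0 < ε →
          2 * ωN * (∫⁻ x, ENNReal.ofReal (max (|g x| - ε) 0 ^ p) ∂volume) ≤ s := by
        intro ε hε
        set M2 : ℝ≥0∞ := 2 * (volume {x | ε < |g x|}) ^ 2 with hM2def
        have hM2 : M2 ≠ ∞ := by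
          rw [hM2def]
          exact ENNReal.mul_ne_top (by simp) (ENNReal.pow_ne_top (hM_fin ε hε))
        have htend : Tendsto (fun n : ℕ => s + M2 * ENNReal.ofReal ((1 / ((n : ℝ) + 1)) ^ p))
            atTop (𝓝 s) := by
          have h0 : Tendsto (fun n : ℕ => (1 / ((n : ℝ) + 1))) atTop (𝓝 0) :=
            tendsto_one_div_add_atTop_nhds_zero_nat
          have hc : ContinuousAt (fun x : ℝ => x ^ p) 0 :=
            Real.continuousAt_rpow_const 0 p (Or.inr hp0.le)
          have h1 : Tendsto (fun n : ℕ => ENNReal.ofReal ((1 / ((n : ℝ) + 1)) ^ p))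
              atTop (𝓝 0) := by
            have h2 := (ENNReal.continuous_ofReal.continuousAt.tendsto).comp
              ((hc.tendsto).comp h0)
            simpa [Function.comp_def, Real.zero_rpow hpne] using h2
          have h3 : Tendsto (fun n : ℕ => s + M2 * ENNReal.ofReal ((1 / ((n : ℝ) + 1)) ^ p))
              atTop (𝓝 (s + M2 * 0)) :=
            Tendsto.const_add s (ENNReal.Tendsto.const_mul h1 (Or.inr hM2))
          simpa using h3
        refine ge_of_tendsto htend (Filter.Eventually.of_forall fun n => ?_)
        have hpos : (0:ℝ) < 1 / ((n : ℝ) + 1) := by positivity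
        have := key ε hε (1 / ((n : ℝ) + 1)) hpos
        calc 2 * ωN * (∫⁻ x, ENNReal.ofReal (max (|g x| - ε) 0 ^ p) ∂volume)
            ≤ s + 2 * (volume {x | ε < |g x|}) ^ 2 * ENNReal.ofReal ((1 / ((n : ℝ) + 1)) ^ p) :=
              this
          _ = s + M2 * ENNReal.ofReal ((1 / ((n : ℝ) + 1)) ^ p) := by rw [hM2def]
      -- take ε → 0 via monotone convergence
      have hmono : Monotone fun n : ℕ =>
          fun x => ENNReal.ofReal (max (|g x| - 1 / ((n : ℝ) + 1)) 0 ^ p) := by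
        intro n k hnk
        intro x
        refine ENNReal.ofReal_le_ofReal ?_
        refine Real.rpow_le_rpow (le_max_right _ _) ?_ hp0.le
        refine max_le_max ?_ le_rfl
        have h1 : 1 / ((k : ℝ) + 1) ≤ 1 / ((n : ℝ) + 1) := by
          apply one_div_le_one_div_of_le (by positivity)
          have : (n : ℝ) ≤ (k : ℝ) := by exact_mod_cast hnk
          linarith
        linarith
      have hsup : (∫⁻ x, ENNReal.ofReal (|g x| ^ p) ∂volume)
          = ⨆ n : ℕ, ∫⁻ x, ENNReal.ofReal (max (|g x| - 1 / ((n : ℝ) + 1)) 0 ^ p) ∂volume := by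
        rw [← lintegral_iSup (fun n => hmJ _) hmono]
        refine lintegral_congr fun x => ?_
        have hbase : Tendsto (fun n : ℕ => max (|g x| - 1 / ((n : ℝ) + 1)) 0) atTop
            (𝓝 (|g x|)) := by
          have h0 : Tendsto (fun n : ℕ => |g x| - 1 / ((n : ℝ) + 1)) atTop (𝓝 (|g x| - 0)) :=
            tendsto_const_nhds.sub tendsto_one_div_add_atTop_nhds_zero_nat
          rw [sub_zero] at h0
          have h1 := h0.max (tendsto_const_nhds (x := (0:ℝ)))
          rwa [max_eq_left (abs_nonneg _)] at h1
        have hrpow : ContinuousAt (fun t : ℝ => t ^ p) (|g x|) := by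
          rcases eq_or_ne (|g x|) 0 with h | h
          · rw [h]; exact Real.continuousAt_rpow_const 0 p (Or.inr hp0.le)
          · exact Real.continuousAt_rpow_const _ p (Or.inl h)
        have htend : Tendsto (fun n : ℕ =>
            ENNReal.ofReal (max (|g x| - 1 / ((n : ℝ) + 1)) 0 ^ p)) atTop
            (𝓝 (ENNReal.ofReal (|g x| ^ p))) :=
          (ENNReal.continuous_ofReal.continuousAt.tendsto).comp ((hrpow.tendsto).comp hbase)
        have hmono' : Monotone fun n : ℕ =>
            ENNReal.ofReal (max (|g x| - 1 / ((n : ℝ) + 1)) 0 ^ p) := fun n k hnk =>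
          hmono hnk x
        have := tendsto_atTop_iSup hmono'
        exact tendsto_nhds_unique htend this
      -- conclude
      have hfinal : 2 * ωN * I ≤ s := by
        rw [← hIg, hsup, ENNReal.mul_iSup]
        exact iSup_le fun n => key2 _ (by positivity)
      calc ENNReal.ofReal (2 * ωN.toReal) * I
          = 2 * ωN * I := by
            rw [ENNReal.ofReal_mul (by norm_num), ENNReal.ofReal_ofNat,
              ENNReal.ofReal_toReal hω_fin]
        _ ≤ s := hfinal
    refine hmain _ fun lam hlam => ?_
    exact le_iSup₂ (f := fun lam (_ : lam > (0:ℝ)) => ENNReal.ofReal (lam ^ p) *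
      (volume.prod volume)
        {q : EuclideanSpace ℝ (Fin N) × EuclideanSpace ℝ (Fin N) |
          lam * dist q.1 q.2 ^ ((N : ℝ) / p) ≤ |u q.1 - u q.2|}) lam hlam
  · -- UPPER BOUND
    refine iSup₂_le fun lam hlam => ?_
    set c : ℝ := 2 / lam with hcdef
    have hc : 0 < c := div_pos two_pos hlam
    set A : Set (EuclideanSpace ℝ (Fin N) × EuclideanSpace ℝ (Fin N)) :=
      {q | dist q.1 q.2 ^ ((N : ℝ) / p) ≤ c * |g q.1|} with hAdef
    set B : Set (EuclideanSpace ℝ (Fin N) × EuclideanSpace ℝ (Fin N)) :=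
      {q | dist q.1 q.2 ^ ((N : ℝ) / p) ≤ c * |g q.2|} with hBdef
    have hAm : MeasurableSet A := measurableSet_le hdistm (by fun_prop)
    have hBm : MeasurableSet B := measurableSet_le hdistm (by fun_prop)
    have hsub : {q : EuclideanSpace ℝ (Fin N) × EuclideanSpace ℝ (Fin N) |
        lam * dist q.1 q.2 ^ ((N : ℝ) / p) ≤ |u q.1 - u q.2|} ∩ (T ×ˢ T) ⊆ A ∪ B := by
      rintro ⟨x, y⟩ ⟨hE, hx, hy⟩
      simp only [Set.mem_setOf_eq] at hE
      have hxg : u x = g x := hx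
      have hyg : u y = g y := hy
      have habs : |u x - u y| ≤ |g x| + |g y| := by
        rw [hxg, hyg, sub_eq_add_neg]
        exact le_trans (abs_add_le _ _) (by rw [abs_neg])
      rcases le_total (|g y|) (|g x|) with h | h
      · left
        show dist x y ^ ((N : ℝ) / p) ≤ c * |g x|
        rw [hcdef, div_mul_eq_mul_div]
        rw [le_div_iff₀ hlam]
        linarith [mul_comm lam (dist x y ^ ((N : ℝ) / p))]
      · right
        show dist x y ^ ((N : ℝ) / p) ≤ c * |g y|
        rw [hcdef, div_mul_eq_mul_div]
        rw [le_div_iff₀ hlam]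
        linarith [mul_comm lam (dist x y ^ ((N : ℝ) / p))]
    have hμA : (volume.prod volume) A = ENNReal.ofReal (c ^ p) * I * ωN := by
      rw [Measure.prod_apply hAm]
      have hsl : ∀ x, volume (Prod.mk x ⁻¹' A)
          = ENNReal.ofReal (c ^ p) * ENNReal.ofReal (|g x| ^ p) * ωN := by
        intro x
        have h1 : Prod.mk x ⁻¹' A = {y | dist x y ^ ((N : ℝ) / p) ≤ c * |g x|} := rfl
        rw [h1, hball x _ (by positivity), hcB x _ (by positivity),
          Real.mul_rpow hc.le (abs_nonneg _), ENNReal.ofReal_mul (by positivity)]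
      simp_rw [hsl]
      rw [lintegral_mul_const _ (by fun_prop), lintegral_const_mul _ hIfun, hIg]
    have hμB : (volume.prod volume) B = ENNReal.ofReal (c ^ p) * I * ωN := by
      rw [Measure.prod_apply_symm hBm]
      have hsl : ∀ y, volume ((fun x => (x, y)) ⁻¹' B)
          = ENNReal.ofReal (c ^ p) * ENNReal.ofReal (|g y| ^ p) * ωN := by
        intro y
        have h1 : (fun x => (x, y)) ⁻¹' B = {x | dist y x ^ ((N : ℝ) / p) ≤ c * |g y|} := by
          ext x
          simp only [Set.mem_preimage, hBdef, Set.mem_setOf_eq, dist_comm x y]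
        rw [h1, hball y _ (by positivity), hcB y _ (by positivity),
          Real.mul_rpow hc.le (abs_nonneg _), ENNReal.ofReal_mul (by positivity)]
      simp_rw [hsl]
      rw [lintegral_mul_const _ (by fun_prop), lintegral_const_mul _ hIfun, hIg]
    have hEbound : (volume.prod volume)
        {q : EuclideanSpace ℝ (Fin N) × EuclideanSpace ℝ (Fin N) |
          lam * dist q.1 q.2 ^ ((N : ℝ) / p) ≤ |u q.1 - u q.2|}
        ≤ 2 * (ENNReal.ofReal (c ^ p) * I * ωN) := by
      refine le_trans (hcutnull _) (le_trans (measure_mono hsub)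
        (le_trans (measure_union_le _ _) (le_of_eq ?_)))
      rw [hμA, hμB, two_mul]
    have hlc : ENNReal.ofReal (lam ^ p) * ENNReal.ofReal (c ^ p) = ENNReal.ofReal (2 ^ p) := by
      rw [← ENNReal.ofReal_mul (by positivity), ← Real.mul_rpow hlam.le hc.le]
      congr 2
      rw [hcdef]
      field_simp
    calc (ENNReal.ofReal (lam ^ p) * (volume.prod volume)
        {q : EuclideanSpace ℝ (Fin N) × EuclideanSpace ℝ (Fin N) |
          lam * dist q.1 q.2 ^ ((N : ℝ) / p) ≤ |u q.1 - u q.2|})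
        ≤ ENNReal.ofReal (lam ^ p) * (2 * (ENNReal.ofReal (c ^ p) * I * ωN)) :=
          mul_le_mul_right hEbound _
      _ = (ENNReal.ofReal (lam ^ p) * ENNReal.ofReal (c ^ p)) * (2 * ωN * I) := by ring
      _ = ENNReal.ofReal (2 ^ p) * (2 * ωN * I) := by rw [hlc]
      _ = ENNReal.ofReal ((2 : ℝ) ^ (p + 1) * ωN.toReal) * I := by
          rw [ENNReal.ofReal_mul (by positivity), ENNReal.ofReal_toReal hω_fin,
            Real.rpow_add two_pos, Real.rpow_one, ENNReal.ofReal_mul (by positivity),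
            ENNReal.ofReal_ofNat]
          ring
end

section
/- For u ∈ L^p(ℝ^N), p ∈ [1,∞), we have lim_{λ→0⁺} λ^p L^{2N}({(x,y) ∈ ℝ^N×ℝ^N : |u(x)-u(y)| ≥ λ|x-y|^{N/p}}) = 2ω_N ‖u‖_{L^p(ℝ^N)}^p. -/
open MeasureTheory Metric Filter Topology Set
open scoped ENNReal NNReal

section GYaux
variable {E : Type*} [NormedAddCommGroup E] [MeasurableSpace E] [BorelSpace E]

private lemma GY_tendsto_diff_cb {μ : Measure E} {S : Set E}
    (hS : MeasurableSet S) (hSf : μ S ≠ ⊤) :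
    Tendsto (fun n : ℕ => μ (S \ closedBall 0 n)) atTop (𝓝 0) := by
  have hempty : ⋂ n : ℕ, S \ closedBall (0:E) n = ∅ := by
    ext x
    simp only [mem_iInter, mem_diff, mem_empty_iff_false, iff_false, not_forall]
    obtain ⟨n, hn⟩ := exists_nat_ge ‖x‖
    exact ⟨n, fun h => h.2 (mem_closedBall_zero_iff.2 hn)⟩
  have h := tendsto_measure_iInter_atTop (μ := μ)
    (s := fun n : ℕ => S \ closedBall 0 n)
    (fun n => (hS.diff measurableSet_closedBall).nullMeasurableSet)
    (fun m n hmn => diff_subset_diff_right (closedBall_subset_closedBall (by exact_mod_cast hmn)))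
    ⟨0, ne_top_of_le_ne_top hSf (measure_mono diff_subset)⟩
  rw [hempty, measure_empty] at h
  exact h

private lemma GY_escape {μ : Measure E} [μ.IsAddRightInvariant]
    {S T : Set E} (hS : MeasurableSet S) (hT : MeasurableSet T)
    (hSf : μ S ≠ ⊤) (hTf : μ T ≠ ⊤) {ι : Type*} {l : Filter ι} {v : ι → E}
    (hv : Tendsto (fun i => ‖v i‖) l atTop) :
    Tendsto (fun i => μ (S ∩ (fun x => x + v i) ⁻¹' T)) l (𝓝 0) := by
  rw [ENNReal.tendsto_nhds_zero]
  intro ε hε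
  have hh : ∀ᶠ n : ℕ in atTop,
      μ (S \ closedBall 0 n) ≤ ε/2 ∧ μ (T \ closedBall 0 n) ≤ ε/2 := by
    have h2 : ε/2 ∈ Ioi (0:ℝ≥0∞) := ENNReal.half_pos hε.ne'
    exact ((GY_tendsto_diff_cb hS hSf).eventually_le_const h2).and
      ((GY_tendsto_diff_cb hT hTf).eventually_le_const h2)
  obtain ⟨n, hn⟩ := hh.exists
  filter_upwards [hv.eventually_gt_atTop (2 * n)] with i hi
  have hsub : S ∩ (fun x => x + v i) ⁻¹' T ⊆
      (S \ closedBall 0 n) ∪ ((fun x => x + v i) ⁻¹' (T \ closedBall 0 n)) := by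
    rintro x ⟨hxS, hxT⟩
    by_cases hx : x ∈ closedBall (0:E) n
    · right
      refine ⟨hxT, fun hmem => ?_⟩
      have h1 : ‖x‖ ≤ n := mem_closedBall_zero_iff.1 hx
      have h2 : ‖x + v i‖ ≤ n := mem_closedBall_zero_iff.1 hmem
      have : ‖v i‖ ≤ 2 * n := by
        calc ‖v i‖ = ‖(x + v i) - x‖ := by rw [add_sub_cancel_left]
        _ ≤ ‖x + v i‖ + ‖x‖ := norm_sub_le _ _
        _ ≤ 2 * n := by linarith
      exact absurd hi (not_lt.2 this)
    · exact Or.inl ⟨hxS, hx⟩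
  calc μ (S ∩ (fun x => x + v i) ⁻¹' T)
      ≤ μ (S \ closedBall 0 n) + μ ((fun x => x + v i) ⁻¹' (T \ closedBall 0 n)) :=
        le_trans (measure_mono hsub) (measure_union_le _ _)
    _ = μ (S \ closedBall 0 n) + μ (T \ closedBall 0 n) := by
        rw [measure_preimage_add_right]
    _ ≤ ε/2 + ε/2 := add_le_add hn.1 hn.2
    _ = ε := ENNReal.add_halves ε

private lemma GY_levelset_limit {μ : Measure E} [μ.IsAddRightInvariant]
    {f : E → ℝ} (hf : Measurable f)
    (hfin : ∀ a : ℝ, 0 < a → μ {x | a ≤ |f x|} ≠ ⊤)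
    {s : ℝ} (hs : 0 < s) (hlvl : μ {x | |f x| = s} = 0)
    {ι : Type*} {l : Filter ι} {v : ι → E}
    (hv : Tendsto (fun i => ‖v i‖) l atTop) :
    Tendsto (fun i => μ {x | s ≤ |f x - f (x + v i)|}) l
      (𝓝 (2 * μ {x | s ≤ |f x|})) := by
  set L := μ {x | s ≤ |f x|} with hLdef
  have hLfin : L ≠ ⊤ := hfin s hs
  have meas_level : ∀ a : ℝ, MeasurableSet {x | a ≤ |f x|} :=
    fun a => measurableSet_le measurable_const hf.abs
  have h0 : Tendsto (fun n : ℕ => s / (n + 2)) atTop (𝓝 0) := by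
    have h1 := (tendsto_const_div_atTop_nhds_zero_nat s).comp (tendsto_add_atTop_nat 2)
    refine h1.congr fun n => ?_
    simp [Function.comp]
  -- continuity from above
  have hup : Tendsto (fun n : ℕ => μ {x | s - s/(n+2) ≤ |f x|}) atTop (𝓝 L) := by
    have hemp : ⋂ n : ℕ, {x | s - s/(n+2) ≤ |f x|} = {x | s ≤ |f x|} := by
      ext x
      simp only [mem_iInter, mem_setOf_eq]
      constructor
      · intro h
        have hto : Tendsto (fun n : ℕ => s - s/(n+2)) atTop (𝓝 s) := by
          simpa using tendsto_const_nhds.sub h0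
        exact le_of_tendsto hto (Eventually.of_forall h)
      · intro h n
        have : (0:ℝ) ≤ s/(n+2) := by positivity
        linarith
    have h := tendsto_measure_iInter_atTop (μ := μ)
      (s := fun n : ℕ => {x | s - s/(n+2) ≤ |f x|})
      (fun n => (meas_level _).nullMeasurableSet)
      (fun m n hmn => by
        intro x hx
        simp only [mem_setOf_eq] at hx ⊢
        have h1 : s/(n+2) ≤ s/(m+2) := by
          apply div_le_div_of_nonneg_left hs.le (by positivity)
          exact_mod_cast by omega
        linarith)
      ⟨0, ne_top_of_le_ne_top (hfin (s/2) (by positivity))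
        (measure_mono (fun x hx => by
          simp only [mem_setOf_eq] at hx ⊢
          norm_num at hx
          linarith))⟩
    rw [hemp] at h
    exact h
  -- continuity from below
  have hdown : Tendsto (fun n : ℕ => μ {x | s + s/(n+2) ≤ |f x|}) atTop (𝓝 L) := by
    have hun : ⋃ n : ℕ, {x | s + s/(n+2) ≤ |f x|} = {x | s < |f x|} := by
      ext x
      simp only [mem_iUnion, mem_setOf_eq]
      constructor
      · rintro ⟨n, hn⟩
        have : (0:ℝ) < s/(n+2) := by positivity
        linarith
      · intro h
        have := h0.eventually_lt_const (show (0:ℝ) < |f x| - s by linarith)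
        obtain ⟨n, hn⟩ := this.exists
        exact ⟨n, by linarith⟩
    have hmono : Monotone (fun n : ℕ => {x | s + s/(n+2) ≤ |f x|}) := by
      intro m n hmn x hx
      simp only [mem_setOf_eq] at hx ⊢
      have h1 : s/(n+2) ≤ s/(m+2) := by
        apply div_le_div_of_nonneg_left hs.le (by positivity)
        exact_mod_cast by omega
      linarith
    have h := tendsto_measure_iUnion_atTop (μ := μ) hmono
    rw [hun] at h
    have heq : μ {x | s < |f x|} = L := by
      refine le_antisymm (measure_mono fun x (hx : s < |f x|) => le_of_lt hx) ?_
      calc L ≤ μ ({x | s < |f x|} ∪ {x | |f x| = s}) := by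
              refine measure_mono fun x (hx : s ≤ |f x|) => ?_
              rcases lt_or_eq_of_le hx with h' | h'
              · exact Or.inl h'
              · exact Or.inr h'.symm
        _ ≤ μ {x | s < |f x|} + μ {x | |f x| = s} := measure_union_le _ _
        _ = μ {x | s < |f x|} := by rw [hlvl, add_zero]
    rw [heq] at h
    exact h
  rw [ENNReal.tendsto_nhds (ENNReal.mul_ne_top (by norm_num) hLfin)]
  intro ε hε
  set η := ε / 4 with hηdef
  have hη : (0:ℝ≥0∞) < η := ENNReal.div_pos hε.ne' (by norm_num)
  have h44 : η + η = ε / 2 := by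
    rw [hηdef, ENNReal.div_add_div_same, ← two_mul, show (4:ℝ≥0∞) = 2*2 by norm_num,
      ← ENNReal.mul_div_mul_left ε 2 two_ne_zero (by norm_num)]
  have h4 : η + η + η + η = ε := by rw [h44, add_assoc, h44, ENNReal.add_halves]
  have hupev : ∀ᶠ n : ℕ in atTop, μ {x | s - s/(n+2) ≤ |f x|} ≤ L + η :=
    hup.eventually_le_const (ENNReal.lt_add_right hLfin hη.ne')
  have hdownev : ∀ᶠ n : ℕ in atTop, L ≤ μ {x | s + s/(n+2) ≤ |f x|} + η := by
    filter_upwards [hdown.eventually (ENNReal.Icc_mem_nhds hLfin hη.ne')] with n hn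
    calc L ≤ (L - η) + η := le_tsub_add
      _ ≤ μ {x | s + s/(n+2) ≤ |f x|} + η := add_le_add_left hn.1 _
  obtain ⟨n, hn1, hn2⟩ := (hupev.and hdownev).exists
  set δ := s/(n+2) with hδdef
  have hδ0 : (0:ℝ) < δ := by positivity
  have hδs : δ ≤ s := by
    rw [hδdef, div_le_iff₀ (by positivity)]
    nlinarith
  set Sd := {x | δ ≤ |f x|} with hSddef
  have hSdm : MeasurableSet Sd := meas_level δ
  have hSdfin : μ Sd ≠ ⊤ := hfin δ hδ0
  have hcross := GY_escape (μ := μ) hSdm hSdm hSdfin hSdfin hv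
  have hcrossev : ∀ᶠ i in l, μ (Sd ∩ (fun x => x + v i) ⁻¹' Sd) ≤ η :=
    hcross.eventually_le_const hη
  filter_upwards [hcrossev] with i hci
  have hmv : Measurable (fun x : E => x + v i) := measurable_add_const _
  constructor
  · -- lower bound
    rw [tsub_le_iff_right]
    set A1 := {x | s + δ ≤ |f x|} with hA1def
    have hA1m : MeasurableSet A1 := meas_level _
    set X := A1 \ ((fun x => x + v i) ⁻¹' Sd) with hXdef
    set Y := ((fun x => x + v i) ⁻¹' A1) \ Sd with hYdef
    have hXm : MeasurableSet X := hA1m.diff (hSdm.preimage hmv)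
    have hYm : MeasurableSet Y := (hA1m.preimage hmv).diff hSdm
    have hdisj : Disjoint X Y := by
      rw [Set.disjoint_left]
      rintro x ⟨hx1, hx2⟩ ⟨hy1, hy2⟩
      have hy1' : s + δ ≤ |f (x + v i)| := hy1
      have hx2' : ¬ (δ ≤ |f (x + v i)|) := hx2
      exact hx2' (by linarith)
    have hXsub : X ⊆ {x | s ≤ |f x - f (x + v i)|} := by
      rintro x ⟨hx1, hx2⟩
      simp only [hA1def, mem_setOf_eq] at hx1
      simp only [mem_preimage, hSddef, mem_setOf_eq, not_le] at hx2
      simp only [mem_setOf_eq]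
      have := abs_sub_abs_le_abs_sub (f x) (f (x + v i))
      linarith
    have hYsub : Y ⊆ {x | s ≤ |f x - f (x + v i)|} := by
      rintro x ⟨hy1, hy2⟩
      simp only [mem_preimage, hA1def, mem_setOf_eq] at hy1
      simp only [hSddef, mem_setOf_eq, not_le] at hy2
      simp only [mem_setOf_eq]
      have := abs_sub_abs_le_abs_sub (f (x + v i)) (f x)
      rw [abs_sub_comm]
      linarith
    have key1 : μ A1 ≤ μ X + η := by
      have hsub : A1 ⊆ X ∪ (Sd ∩ (fun x => x + v i) ⁻¹' Sd) := by
        intro x hx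
        by_cases hxp : x ∈ (fun x => x + v i) ⁻¹' Sd
        · right
          refine ⟨?_, hxp⟩
          simp only [hA1def, mem_setOf_eq] at hx
          simp only [hSddef, mem_setOf_eq]
          linarith
        · exact Or.inl ⟨hx, hxp⟩
      calc μ A1 ≤ μ X + μ (Sd ∩ (fun x => x + v i) ⁻¹' Sd) :=
            le_trans (measure_mono hsub) (measure_union_le _ _)
        _ ≤ μ X + η := add_le_add_right hci _
    have key2 : μ A1 ≤ μ Y + η := by
      have htrans : μ A1 = μ ((fun x => x + v i) ⁻¹' A1) :=
        (measure_preimage_add_right μ (v i) A1).symm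
      have hsub : (fun x => x + v i) ⁻¹' A1 ⊆ Y ∪ (Sd ∩ (fun x => x + v i) ⁻¹' Sd) := by
        intro x hx
        by_cases hxs : x ∈ Sd
        · right
          refine ⟨hxs, ?_⟩
          simp only [mem_preimage, hA1def, mem_setOf_eq] at hx
          simp only [mem_preimage, hSddef, mem_setOf_eq]
          linarith
        · exact Or.inl ⟨hx, hxs⟩
      calc μ A1 = μ ((fun x => x + v i) ⁻¹' A1) := htrans
        _ ≤ μ Y + μ (Sd ∩ (fun x => x + v i) ⁻¹' Sd) :=
            le_trans (measure_mono hsub) (measure_union_le _ _)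
        _ ≤ μ Y + η := add_le_add_right hci _
    calc 2 * L = L + L := two_mul L
      _ ≤ (μ A1 + η) + (μ A1 + η) := add_le_add hn2 hn2
      _ ≤ ((μ X + η) + η) + ((μ Y + η) + η) :=
          add_le_add (add_le_add_left key1 _) (add_le_add_left key2 _)
      _ = (μ X + μ Y) + (η + η + η + η) := by ring
      _ = μ (X ∪ Y) + ε := by rw [measure_union hdisj hYm, h4]
      _ ≤ μ {x | s ≤ |f x - f (x + v i)|} + ε := by
          refine add_le_add_left (measure_mono ?_) _
          exact union_subset hXsub hYsub
  · -- upper bound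
    have hincl : {x | s ≤ |f x - f (x + v i)|} ⊆
        {x | s - δ ≤ |f x|} ∪ ((fun x => x + v i) ⁻¹' {x | s - δ ≤ |f x|}) ∪
          (Sd ∩ (fun x => x + v i) ⁻¹' Sd) := by
      intro x hx
      simp only [mem_setOf_eq] at hx
      by_cases hfx : δ ≤ |f x|
      · by_cases hgx : δ ≤ |f (x + v i)|
        · exact Or.inr ⟨hfx, hgx⟩
        · push_neg at hgx
          left; left
          simp only [mem_setOf_eq]
          have := abs_sub (f x) (f (x + v i))
          linarith
      · push_neg at hfx
        left; right
        simp only [mem_preimage, mem_setOf_eq]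
        have := abs_sub (f x) (f (x + v i))
        linarith
    calc μ {x | s ≤ |f x - f (x + v i)|}
        ≤ μ ({x | s - δ ≤ |f x|} ∪ ((fun x => x + v i) ⁻¹' {x | s - δ ≤ |f x|})) +
            μ (Sd ∩ (fun x => x + v i) ⁻¹' Sd) :=
          le_trans (measure_mono hincl) (measure_union_le _ _)
      _ ≤ (μ {x | s - δ ≤ |f x|} + μ ((fun x => x + v i) ⁻¹' {x | s - δ ≤ |f x|})) + η :=
          add_le_add (measure_union_le _ _) hci
      _ = (μ {x | s - δ ≤ |f x|} + μ {x | s - δ ≤ |f x|}) + η := by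
          rw [measure_preimage_add_right]
      _ ≤ ((L + η) + (L + η)) + η := add_le_add_left (add_le_add hn1 hn1) _
      _ = 2 * L + (η + η + η) := by ring
      _ ≤ 2 * L + ε := by
          refine add_le_add_right ?_ _
          calc η + η + η ≤ η + η + η + η := le_self_add
            _ = ε := h4
end GYaux

section GYeuclid
variable {N : ℕ}

private lemma GY_rpow_iff {p : ℝ} (hp : 1 ≤ p) (hN : 0 < N) {r t : ℝ} (hr : 0 ≤ r) (ht : 0 ≤ t) :
    r ^ ((N:ℝ)/p) ≤ t ↔ r ≤ t ^ (p/(N:ℝ)) := by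
  have hp0 : (0:ℝ) < p := by linarith
  have hN0 : (0:ℝ) < N := by exact_mod_cast hN
  constructor
  · intro h
    have h2 := Real.rpow_le_rpow (Real.rpow_nonneg hr _) h (by positivity : (0:ℝ) ≤ p/(N:ℝ))
    rwa [← Real.rpow_mul hr, show (N:ℝ)/p * (p/(N:ℝ)) = 1 by field_simp, Real.rpow_one] at h2
  · intro h
    have h2 := Real.rpow_le_rpow hr h (by positivity : (0:ℝ) ≤ (N:ℝ)/p)
    rwa [← Real.rpow_mul ht, show p/(N:ℝ) * ((N:ℝ)/p) = 1 by field_simp, Real.rpow_one] at h2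

private lemma GY_scaling (hN : 0 < N) {p : ℝ} (hp : 1 ≤ p)
    (u : EuclideanSpace ℝ (Fin N) → ℝ) (hm : Measurable u) {lam : ℝ} (hlam : 0 < lam) :
    ENNReal.ofReal (lam ^ p) *
      (volume.prod volume) {q : EuclideanSpace ℝ (Fin N) × EuclideanSpace ℝ (Fin N) |
          lam * dist q.1 q.2 ^ ((N:ℝ)/p) ≤ |u q.1 - u q.2|}
      = ∫⁻ h, volume {x | ‖h‖ ^ ((N:ℝ)/p) ≤ |u x - u (x + lam ^ (-(p/(N:ℝ))) • h)|} := by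
  have hp0 : (0:ℝ) < p := by linarith
  have hN0 : (0:ℝ) < N := by exact_mod_cast hN
  set c : ℝ := lam ^ (-(p/(N:ℝ))) with hcdef
  have hc : 0 < c := Real.rpow_pos_of_pos hlam _
  have hcNp : c ^ ((N:ℝ)/p) = lam⁻¹ := by
    rw [hcdef, ← Real.rpow_mul hlam.le, show -(p/(N:ℝ)) * ((N:ℝ)/p) = -1 by field_simp,
      Real.rpow_neg_one]
  have hkey : ∀ t : ℝ, 0 ≤ t → lam * (c * t) ^ ((N:ℝ)/p) = t ^ ((N:ℝ)/p) := by
    intro t ht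
    rw [Real.mul_rpow hc.le ht, hcNp, ← mul_assoc, mul_inv_cancel₀ hlam.ne', one_mul]
  have hcN : ENNReal.ofReal (|((c ^ Module.finrank ℝ (EuclideanSpace ℝ (Fin N)) : ℝ))⁻¹|)
      = ENNReal.ofReal (lam ^ p) := by
    congr 1
    rw [finrank_euclideanSpace_fin, hcdef, ← Real.rpow_natCast (lam ^ (-(p/(N:ℝ)))) N,
      ← Real.rpow_mul hlam.le, show -(p/(N:ℝ)) * (N:ℝ) = -p by field_simp,
      Real.rpow_neg hlam.le, inv_inv, abs_of_pos (Real.rpow_pos_of_pos hlam _)]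
  have hS : MeasurableSet {q : EuclideanSpace ℝ (Fin N) × EuclideanSpace ℝ (Fin N) |
      lam * dist q.1 q.2 ^ ((N:ℝ)/p) ≤ |u q.1 - u q.2|} := by
    refine measurableSet_le ?_ ?_
    · exact (continuous_const.mul ((continuous_fst.dist continuous_snd).rpow_const
        (fun q => Or.inr (by positivity)))).measurable
    · exact ((hm.comp measurable_fst).sub (hm.comp measurable_snd)).abs
  have hC : MeasurableSet {q : EuclideanSpace ℝ (Fin N) × EuclideanSpace ℝ (Fin N) |
      ‖q.2‖ ^ ((N:ℝ)/p) ≤ |u q.1 - u (q.1 + c • q.2)|} := by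
    refine measurableSet_le ?_ ?_
    · exact ((continuous_norm.comp continuous_snd).rpow_const
        (fun q => Or.inr (by positivity))).measurable
    · exact ((hm.comp measurable_fst).sub
        (hm.comp (measurable_fst.add (measurable_snd.const_smul c)))).abs
  rw [Measure.prod_apply hS, ← lintegral_const_mul' _ _ ENNReal.ofReal_ne_top]
  have step : ∀ x : EuclideanSpace ℝ (Fin N),
      ENNReal.ofReal (lam ^ p) * volume (Prod.mk x ⁻¹'
          {q : EuclideanSpace ℝ (Fin N) × EuclideanSpace ℝ (Fin N) |
          lam * dist q.1 q.2 ^ ((N:ℝ)/p) ≤ |u q.1 - u q.2|})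
        = volume {h : EuclideanSpace ℝ (Fin N) | ‖h‖ ^ ((N:ℝ)/p) ≤ |u x - u (x + c • h)|} := by
    intro x
    have e1 : Prod.mk x ⁻¹' {q : EuclideanSpace ℝ (Fin N) × EuclideanSpace ℝ (Fin N) |
        lam * dist q.1 q.2 ^ ((N:ℝ)/p) ≤ |u q.1 - u q.2|}
        = {y | lam * dist x y ^ ((N:ℝ)/p) ≤ |u x - u y|} := rfl
    rw [e1, ← measure_preimage_add volume x {y | lam * dist x y ^ ((N:ℝ)/p) ≤ |u x - u y|}]
    have e2 : (fun h => x + h) ⁻¹' {y | lam * dist x y ^ ((N:ℝ)/p) ≤ |u x - u y|}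
        = {h | lam * dist x (x + h) ^ ((N:ℝ)/p) ≤ |u x - u (x + h)|} := rfl
    rw [e2, ← hcN, ← Measure.addHaar_preimage_smul volume hc.ne']
    congr 1
    ext h
    simp only [mem_preimage, mem_setOf_eq, dist_self_add_right, norm_smul, Real.norm_eq_abs,
      abs_of_pos hc]
    rw [hkey ‖h‖ (norm_nonneg h)]
  rw [lintegral_congr step]
  have h1 : (∫⁻ x, volume {h : EuclideanSpace ℝ (Fin N) | ‖h‖ ^ ((N:ℝ)/p) ≤ |u x - u (x + c • h)|})
      = (volume.prod volume) {q : EuclideanSpace ℝ (Fin N) × EuclideanSpace ℝ (Fin N) |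
          ‖q.2‖ ^ ((N:ℝ)/p) ≤ |u q.1 - u (q.1 + c • q.2)|} := (Measure.prod_apply hC).symm
  rw [h1, Measure.prod_apply_symm hC]
  rfl

private lemma GY_layer (hN : 0 < N) {p : ℝ} (hp : 1 ≤ p) {c : ℝ} (hc : 0 < c)
    (g : EuclideanSpace ℝ (Fin N) → ℝ) (hm : Measurable g) :
    ∫⁻ h : EuclideanSpace ℝ (Fin N),
        volume {x : EuclideanSpace ℝ (Fin N) | ‖h‖ ^ ((N:ℝ)/p) ≤ c * |g x|}
      = ENNReal.ofReal (c ^ p) * volume (ball (0:EuclideanSpace ℝ (Fin N)) 1) *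
          ∫⁻ x, ENNReal.ofReal (|g x| ^ p) := by
  have hp0 : (0:ℝ) < p := by linarith
  have hN0 : (0:ℝ) < N := by exact_mod_cast hN
  have hD : MeasurableSet {q : EuclideanSpace ℝ (Fin N) × EuclideanSpace ℝ (Fin N) |
      ‖q.1‖ ^ ((N:ℝ)/p) ≤ c * |g q.2|} := by
    refine measurableSet_le ?_ ?_
    · exact ((continuous_norm.comp continuous_fst).rpow_const
        (fun q => Or.inr (by positivity))).measurable
    · exact ((hm.comp measurable_snd).abs.const_mul c)
  have e1 : ∫⁻ h : EuclideanSpace ℝ (Fin N),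
        volume {x : EuclideanSpace ℝ (Fin N) | ‖h‖ ^ ((N:ℝ)/p) ≤ c * |g x|}
      = ∫⁻ x, volume {h : EuclideanSpace ℝ (Fin N) | ‖h‖ ^ ((N:ℝ)/p) ≤ c * |g x|} := by
    have h1 : (∫⁻ h : EuclideanSpace ℝ (Fin N),
          volume {x : EuclideanSpace ℝ (Fin N) | ‖h‖ ^ ((N:ℝ)/p) ≤ c * |g x|})
        = (volume.prod volume) {q : EuclideanSpace ℝ (Fin N) × EuclideanSpace ℝ (Fin N) |
            ‖q.1‖ ^ ((N:ℝ)/p) ≤ c * |g q.2|} := (Measure.prod_apply hD).symm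
    rw [h1, Measure.prod_apply_symm hD]
    rfl
  rw [e1]
  have e2 : ∀ x : EuclideanSpace ℝ (Fin N),
      volume {h : EuclideanSpace ℝ (Fin N) | ‖h‖ ^ ((N:ℝ)/p) ≤ c * |g x|}
        = ENNReal.ofReal (c ^ p) * ENNReal.ofReal (|g x| ^ p) *
            volume (ball (0:EuclideanSpace ℝ (Fin N)) 1) := by
    intro x
    have hb : {h : EuclideanSpace ℝ (Fin N) | ‖h‖ ^ ((N:ℝ)/p) ≤ c * |g x|}
        = closedBall 0 ((c * |g x|) ^ (p/(N:ℝ))) := by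
      ext h
      rw [mem_closedBall_zero_iff, mem_setOf_eq]
      exact GY_rpow_iff hp hN (norm_nonneg h) (by positivity)
    rw [hb, Measure.addHaar_closedBall volume _ (by positivity), finrank_euclideanSpace_fin]
    congr 1
    rw [← Real.rpow_natCast ((c * |g x|) ^ (p/(N:ℝ))) N, ← Real.rpow_mul (by positivity),
      show p/(N:ℝ) * (N:ℝ) = p by field_simp, Real.mul_rpow hc.le (abs_nonneg _),
      ENNReal.ofReal_mul (by positivity)]
  rw [lintegral_congr e2, lintegral_mul_const' _ _ measure_ball_lt_top.ne,
    lintegral_const_mul' _ _ ENNReal.ofReal_ne_top]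
  ring

private lemma GY_ae_good (hN : 0 < N) {p : ℝ} (hp : 1 ≤ p)
    (f : EuclideanSpace ℝ (Fin N) → ℝ) (hm : Measurable f) :
    ∀ᵐ h : EuclideanSpace ℝ (Fin N),
      h ≠ 0 ∧ volume {x | |f x| = ‖h‖ ^ ((N:ℝ)/p)} = 0 := by
  have hp0 : (0:ℝ) < p := by linarith
  have hN0 : (0:ℝ) < N := by exact_mod_cast hN
  haveI : Nontrivial (EuclideanSpace ℝ (Fin N)) :=
    Module.nontrivial_of_finrank_pos (R := ℝ) (by rw [finrank_euclideanSpace_fin]; exact hN)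
  have hD : Set.Countable {t : ℝ | 0 < volume {x | |f x| = t}} :=
    Measure.countable_meas_level_set_pos hm.abs
  rw [ae_iff]
  refine measure_mono_null (fun h hh => ?_)
    (measure_union_null (measure_singleton (0 : EuclideanSpace ℝ (Fin N)))
      ((measure_biUnion_null_iff hD).2
        (fun t _ => Measure.addHaar_sphere volume 0 (t ^ (p/(N:ℝ))))))
  simp only [mem_setOf_eq, not_and_or, not_not] at hh
  rcases hh with h0 | hpos
  · exact Or.inl h0
  · right
    refine mem_biUnion (show ‖h‖ ^ ((N:ℝ)/p) ∈ {t : ℝ | 0 < volume {x | |f x| = t}} from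
      pos_iff_ne_zero.2 hpos) ?_
    rw [mem_sphere_zero_iff_norm, ← Real.rpow_mul (norm_nonneg h),
      show (N:ℝ)/p * (p/(N:ℝ)) = 1 by field_simp, Real.rpow_one]

private lemma GY_rpow_neg_tendsto {r : ℝ} (hr : 0 < r) :
    Tendsto (fun lam : ℝ => lam ^ (-r)) (𝓝[>] (0:ℝ)) atTop := by
  have h1 : Tendsto (fun lam : ℝ => lam ^ r) (𝓝[>] (0:ℝ)) (𝓝[>] (0:ℝ)) := by
    apply tendsto_nhdsWithin_of_tendsto_nhds_of_eventually_within
    · have hc : ContinuousAt (fun lam : ℝ => lam ^ r) 0 :=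
        Real.continuousAt_rpow_const 0 r (Or.inr hr.le)
      have := hc.tendsto
      rw [Real.zero_rpow hr.ne'] at this
      exact this.mono_left nhdsWithin_le_nhds
    · filter_upwards [self_mem_nhdsWithin] with x hx
      exact Real.rpow_pos_of_pos hx _
  have h2 : Tendsto (fun lam : ℝ => (lam ^ r)⁻¹) (𝓝[>] (0:ℝ)) atTop :=
    tendsto_inv_nhdsGT_zero.comp h1
  refine h2.congr' ?_
  filter_upwards [self_mem_nhdsWithin] with x hx
  rw [← Real.rpow_neg (le_of_lt hx)]

private lemma GY_lintegral_ne_top {α : Type*} [MeasurableSpace α] {μ : Measure α} {p : ℝ}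
    (hp : 1 ≤ p) {u : α → ℝ} (hu : MemLp u (ENNReal.ofReal p) μ) :
    ∫⁻ x, ENNReal.ofReal (|u x| ^ p) ∂μ ≠ ⊤ := by
  have hp0 : (0:ℝ) < p := by linarith
  have h1 := hu.2
  rw [eLpNorm_eq_lintegral_rpow_enorm_toReal (ENNReal.ofReal_pos.2 hp0).ne'
    ENNReal.ofReal_ne_top] at h1
  rw [ENNReal.toReal_ofReal hp0.le] at h1
  have h2 := (ENNReal.rpow_lt_top_iff_of_pos (by positivity : (0:ℝ) < 1/p)).1 h1
  rw [← lt_top_iff_ne_top]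
  convert h2 using 1
  apply lintegral_congr fun x => ?_
  rw [Real.enorm_eq_ofReal_abs, ← ENNReal.ofReal_rpow_of_nonneg (abs_nonneg _) hp0.le]

private lemma GY_chebyshev {α : Type*} [MeasurableSpace α] {μ : Measure α} {p : ℝ}
    (hp : 1 ≤ p) {u : α → ℝ} (hm : Measurable u)
    (hI : ∫⁻ x, ENNReal.ofReal (|u x| ^ p) ∂μ ≠ ⊤)
    {a : ℝ} (ha : 0 < a) : μ {x | a ≤ |u x|} ≠ ⊤ := by
  have hp0 : (0:ℝ) < p := by linarith
  have hmono : {x | a ≤ |u x|} ⊆ {x | ENNReal.ofReal (a ^ p) ≤ ENNReal.ofReal (|u x| ^ p)} :=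
    fun x hx => ENNReal.ofReal_le_ofReal (Real.rpow_le_rpow ha.le hx hp0.le)
  have hcheb := mul_meas_ge_le_lintegral₀
    (μ := μ) (f := fun x => ENNReal.ofReal (|u x| ^ p))
    (hm.abs.pow_const p).ennreal_ofReal.aemeasurable (ENNReal.ofReal (a ^ p))
  intro htop
  have h1 : μ {x | ENNReal.ofReal (a ^ p) ≤ ENNReal.ofReal (|u x| ^ p)} = ⊤ :=
    top_le_iff.1 (htop ▸ measure_mono hmono)
  rw [h1, ENNReal.mul_top
    (by simp [Real.rpow_pos_of_pos ha p, ne_of_gt] : ENNReal.ofReal (a^p) ≠ 0)] at hcheb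
  exact hI (top_le_iff.1 hcheb)

private theorem GY_main_aux (hN : 0 < N) {p : ℝ} (hp : 1 ≤ p)
    (f : EuclideanSpace ℝ (Fin N) → ℝ) (hm : Measurable f)
    (hI : ∫⁻ x, ENNReal.ofReal (|f x| ^ p) ∂volume ≠ ⊤) :
    Tendsto (fun lam : ℝ => ENNReal.ofReal (lam ^ p) *
        (volume.prod volume)
          {q : EuclideanSpace ℝ (Fin N) × EuclideanSpace ℝ (Fin N) |
            lam * dist q.1 q.2 ^ ((N : ℝ) / p) ≤ |f q.1 - f q.2|})
      (𝓝[>] 0)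
      (𝓝 (ENNReal.ofReal (2 * (volume (ball (0 : EuclideanSpace ℝ (Fin N)) 1)).toReal) *
        ∫⁻ x, ENNReal.ofReal (|f x| ^ p) ∂volume)) := by
  have hp0 : (0:ℝ) < p := by linarith
  have hN0 : (0:ℝ) < N := by exact_mod_cast hN
  set ω := volume (ball (0 : EuclideanSpace ℝ (Fin N)) 1) with hωdef
  have hω : ω ≠ ⊤ := measure_ball_lt_top.ne
  have hcheb : ∀ a : ℝ, 0 < a → volume {x | a ≤ |f x|} ≠ ⊤ :=
    fun a ha => GY_chebyshev hp hm hI ha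
  set F : ℝ → EuclideanSpace ℝ (Fin N) → ℝ≥0∞ := fun lam h =>
    volume {x | ‖h‖ ^ ((N:ℝ)/p) ≤ |f x - f (x + lam ^ (-(p/(N:ℝ))) • h)|} with hFdef
  set φ : EuclideanSpace ℝ (Fin N) → ℝ≥0∞ := fun h =>
    2 * volume {x | ‖h‖ ^ ((N:ℝ)/p) ≤ |f x|} with hφdef
  set bound : EuclideanSpace ℝ (Fin N) → ℝ≥0∞ := fun h =>
    2 * volume {x | ‖h‖ ^ ((N:ℝ)/p) ≤ 2 * |f x|} with hbdef
  -- measurability of F lam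
  have hFmeas : ∀ lam : ℝ, Measurable (F lam) := by
    intro lam
    set c : ℝ := lam ^ (-(p/(N:ℝ)))
    have hC : MeasurableSet {q : EuclideanSpace ℝ (Fin N) × EuclideanSpace ℝ (Fin N) |
        ‖q.1‖ ^ ((N:ℝ)/p) ≤ |f q.2 - f (q.2 + c • q.1)|} := by
      refine measurableSet_le ?_ ?_
      · exact ((continuous_norm.comp continuous_fst).rpow_const
          (fun q => Or.inr (by positivity))).measurable
      · exact ((hm.comp measurable_snd).sub
          (hm.comp (measurable_snd.add (measurable_fst.const_smul c)))).abs
    exact measurable_measure_prodMk_left hC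
  -- bound
  have hFle : ∀ lam : ℝ, ∀ h : EuclideanSpace ℝ (Fin N), F lam h ≤ bound h := by
    intro lam h
    set c : ℝ := lam ^ (-(p/(N:ℝ)))
    set s : ℝ := ‖h‖ ^ ((N:ℝ)/p)
    have hincl : {x | s ≤ |f x - f (x + c • h)|} ⊆
        {x | s ≤ 2 * |f x|} ∪ ((fun x => x + c • h) ⁻¹' {x | s ≤ 2 * |f x|}) := by
      intro x hx
      simp only [mem_setOf_eq] at hx
      by_cases h1 : s ≤ 2 * |f x|
      · exact Or.inl h1
      · right
        simp only [mem_preimage, mem_setOf_eq]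
        push_neg at h1
        have := abs_sub (f x) (f (x + c • h))
        linarith
    calc F lam h ≤ volume ({x | s ≤ 2 * |f x|} ∪
          ((fun x => x + c • h) ⁻¹' {x | s ≤ 2 * |f x|})) := measure_mono hincl
      _ ≤ volume {x | s ≤ 2 * |f x|} +
          volume ((fun x => x + c • h) ⁻¹' {x | s ≤ 2 * |f x|}) := measure_union_le _ _
      _ = volume {x | s ≤ 2 * |f x|} + volume {x | s ≤ 2 * |f x|} := by
          rw [measure_preimage_add_right]
      _ = bound h := (two_mul _).symm
  -- integral of bound
  have hboundint : ∫⁻ h, bound h ≠ ⊤ := by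
    rw [hbdef, lintegral_const_mul' _ _ (by norm_num : (2:ℝ≥0∞) ≠ ⊤),
      GY_layer hN hp (by norm_num : (0:ℝ) < 2) f hm]
    exact ENNReal.mul_ne_top (by norm_num)
      (ENNReal.mul_ne_top (ENNReal.mul_ne_top ENNReal.ofReal_ne_top hω) hI)
  -- integral of φ
  have hφint : ∫⁻ h, φ h = ENNReal.ofReal (2 * ω.toReal) *
      ∫⁻ x, ENNReal.ofReal (|f x| ^ p) ∂volume := by
    have e0 : ∀ h : EuclideanSpace ℝ (Fin N),
        φ h = 2 * volume {x | ‖h‖ ^ ((N:ℝ)/p) ≤ 1 * |f x|} := by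
      intro h
      simp only [hφdef, one_mul]
    rw [lintegral_congr e0, lintegral_const_mul' _ _ (by norm_num : (2:ℝ≥0∞) ≠ ⊤),
      GY_layer hN hp (by norm_num : (0:ℝ) < 1) f hm]
    rw [Real.one_rpow, ENNReal.ofReal_one, one_mul, ENNReal.ofReal_mul (by norm_num),
      ENNReal.ofReal_ofNat, ENNReal.ofReal_toReal hω, mul_assoc]
  -- pointwise limit
  have hlim : ∀ᵐ h : EuclideanSpace ℝ (Fin N),
      Tendsto (fun lam => F lam h) (𝓝[>] (0:ℝ)) (𝓝 (φ h)) := by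
    filter_upwards [GY_ae_good hN hp f hm] with h hh
    obtain ⟨h0, hlvl⟩ := hh
    have hs : (0:ℝ) < ‖h‖ ^ ((N:ℝ)/p) :=
      Real.rpow_pos_of_pos (norm_pos_iff.2 h0) _
    have hv : Tendsto (fun lam : ℝ => ‖lam ^ (-(p/(N:ℝ))) • h‖) (𝓝[>] (0:ℝ)) atTop := by
      have hcoef : Tendsto (fun lam : ℝ => lam ^ (-(p/(N:ℝ)))) (𝓝[>] (0:ℝ)) atTop :=
        GY_rpow_neg_tendsto (by positivity)
      have h2 : Tendsto (fun lam : ℝ => lam ^ (-(p/(N:ℝ))) * ‖h‖) (𝓝[>] (0:ℝ)) atTop :=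
        hcoef.atTop_mul_const (norm_pos_iff.2 h0)
      refine h2.congr' ?_
      filter_upwards [self_mem_nhdsWithin] with lam hlam
      rw [norm_smul, Real.norm_eq_abs,
        abs_of_pos (Real.rpow_pos_of_pos hlam _)]
    exact GY_levelset_limit hm hcheb hs hlvl hv
  -- dominated convergence
  have hDCT : Tendsto (fun lam => ∫⁻ h, F lam h) (𝓝[>] (0:ℝ)) (𝓝 (∫⁻ h, φ h)) :=
    tendsto_lintegral_filter_of_dominated_convergence bound
      (Eventually.of_forall hFmeas) (Eventually.of_forall fun lam =>
        Eventually.of_forall (hFle lam)) hboundint hlim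
  rw [hφint] at hDCT
  refine hDCT.congr' ?_
  filter_upwards [self_mem_nhdsWithin] with lam hlam
  exact (GY_scaling hN hp f hm hlam).symm
end GYeuclid

theorem GuYung_euclidean_limit
    (N : ℕ) (hN : 0 < N) (p : ℝ) (hp : 1 ≤ p)
    (u : EuclideanSpace ℝ (Fin N) → ℝ) (hu : MemLp u (ENNReal.ofReal p) volume) :
    Tendsto (fun lam : ℝ => ENNReal.ofReal (lam ^ p) *
        (volume.prod volume)
          {q : EuclideanSpace ℝ (Fin N) × EuclideanSpace ℝ (Fin N) |
            lam * dist q.1 q.2 ^ ((N : ℝ) / p) ≤ |u q.1 - u q.2|})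
      (𝓝[>] 0)
      (𝓝 (ENNReal.ofReal (2 * (volume (ball (0 : EuclideanSpace ℝ (Fin N)) 1)).toReal) *
        ∫⁻ x, ENNReal.ofReal (|u x| ^ p) ∂volume)) := by
  set f := hu.1.mk u with hfdef
  have hfm : Measurable f := hu.1.stronglyMeasurable_mk.measurable
  have hae : u =ᵐ[volume] f := hu.1.ae_eq_mk
  have hIeq : ∫⁻ x, ENNReal.ofReal (|u x| ^ p) ∂volume
      = ∫⁻ x, ENNReal.ofReal (|f x| ^ p) ∂volume := by
    apply lintegral_congr_ae
    filter_upwards [hae] with x hx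
    rw [hx]
  have hIf : ∫⁻ x, ENNReal.ofReal (|f x| ^ p) ∂volume ≠ ⊤ := by
    rw [← hIeq]; exact GY_lintegral_ne_top hp hu
  have hmain := GY_main_aux hN hp f hfm hIf
  -- transfer back to u
  have hZ : volume {x : EuclideanSpace ℝ (Fin N) | ¬ u x = f x} = 0 := by
    rw [← ae_iff]
    exact hae
  have h1 : ∀ᵐ q : EuclideanSpace ℝ (Fin N) × EuclideanSpace ℝ (Fin N)
      ∂(volume.prod volume), u q.1 = f q.1 := by
    rw [ae_iff]
    have e : {q : EuclideanSpace ℝ (Fin N) × EuclideanSpace ℝ (Fin N) | ¬ u q.1 = f q.1}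
        = {x : EuclideanSpace ℝ (Fin N) | ¬ u x = f x} ×ˢ univ := by
      ext ⟨a, b⟩
      simp [Set.mem_prod]
    rw [e, Measure.prod_prod, hZ, zero_mul]
  have h2 : ∀ᵐ q : EuclideanSpace ℝ (Fin N) × EuclideanSpace ℝ (Fin N)
      ∂(volume.prod volume), u q.2 = f q.2 := by
    rw [ae_iff]
    have e : {q : EuclideanSpace ℝ (Fin N) × EuclideanSpace ℝ (Fin N) | ¬ u q.2 = f q.2}
        = (univ : Set (EuclideanSpace ℝ (Fin N))) ×ˢ {x : EuclideanSpace ℝ (Fin N) | ¬ u x = f x} := by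
      ext ⟨a, b⟩
      simp [Set.mem_prod]
    rw [e, Measure.prod_prod, hZ, mul_zero]
  have hseteq : ∀ lam : ℝ,
      (volume.prod volume) {q : EuclideanSpace ℝ (Fin N) × EuclideanSpace ℝ (Fin N) |
          lam * dist q.1 q.2 ^ ((N:ℝ)/p) ≤ |u q.1 - u q.2|}
      = (volume.prod volume) {q : EuclideanSpace ℝ (Fin N) × EuclideanSpace ℝ (Fin N) |
          lam * dist q.1 q.2 ^ ((N:ℝ)/p) ≤ |f q.1 - f q.2|} := by
    intro lam
    apply measure_congr
    apply Filter.eventuallyEq_set.2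
    filter_upwards [h1, h2] with q hq1 hq2
    simp only [mem_setOf_eq, hq1, hq2]
  rw [hIeq]
  refine Tendsto.congr (fun lam => ?_) hmain
  rw [hseteq lam]
end

section
/- Let w ∈ L^∞(ℝ^N) be a weight with m ≤ w(x) ≤ M a.e. for constants 0 < m ≤ M. Then the measure ν = w·L^N is Ahlfors regular of dimension N with constants C_a = mω_N and C_A = Mω_N, and for all p ∈ [1,∞), u ∈ L^p(ℝ^N, ν): 2mω_N ‖u‖_{L^p(ν)}^p ≤ sup_{λ>0} λ^p (ν⊗ν)({(x,y) : |u(x)-u(y)| ≥ λ|x-y|^{N/p}}) ≤ 2^{p+1} Mω_N ‖u‖_{L^p(ν)}^p. -/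
open MeasureTheory Metric Filter Topology ENNReal


theorem key_iff {p : ℝ} (hp : 1 ≤ p) {N : ℕ} (hN : 0 < N)
    {d a lam : ℝ} (hd : 0 ≤ d) (ha : 0 ≤ a) (hlam : 0 < lam) :
    lam * d ^ ((N : ℝ) / p) ≤ a ↔ d ≤ (a / lam) ^ (p / (N : ℝ)) := by
  have hp0 : (0:ℝ) < p := lt_of_lt_of_le one_pos hp
  have hN0 : (0:ℝ) < (N:ℝ) := by exact_mod_cast hN
  have hnp : (0:ℝ) < (N:ℝ)/p := div_pos hN0 hp0
  have h2 : (0:ℝ) ≤ a / lam := div_nonneg ha hlam.le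
  rw [mul_comm, ← le_div_iff₀ hlam]
  rw [← Real.rpow_le_rpow_iff hd (Real.rpow_nonneg h2 _) hnp]
  rw [← Real.rpow_mul h2, div_mul_div_comm, mul_comm p, ← div_mul_div_comm,
    div_self hN0.ne', div_self hp0.ne', one_mul, Real.rpow_one]

theorem pow_id {p : ℝ} (hp : 1 ≤ p) {N : ℕ} (hN : 0 < N) {a : ℝ} (ha : 0 ≤ a) :
    ((a : ℝ) ^ (p / (N : ℝ))) ^ N = a ^ p := by
  have hN0 : (0:ℝ) < (N:ℝ) := by exact_mod_cast hN
  rw [← Real.rpow_natCast (a ^ (p / (N:ℝ))) N, ← Real.rpow_mul ha,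
    div_mul_cancel₀ _ hN0.ne']

variable {N : ℕ}



-- measure bounds
theorem nu_bounds (hN : 0 < N)
    (w : EuclideanSpace ℝ (Fin N) → ℝ) (hw : Measurable w)
    (m M : ℝ) (hm : 0 < m)
    (hbound : ∀ᵐ x ∂(volume : Measure (EuclideanSpace ℝ (Fin N))), m ≤ w x ∧ w x ≤ M)
    {s : Set (EuclideanSpace ℝ (Fin N))} (hs : MeasurableSet s) :
    ENNReal.ofReal m * volume s ≤ (volume.withDensity fun x => ENNReal.ofReal (w x)) s ∧
    (volume.withDensity fun x => ENNReal.ofReal (w x)) s ≤ ENNReal.ofReal M * volume s := by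
  rw [withDensity_apply _ hs]
  constructor
  · calc ENNReal.ofReal m * volume s = ∫⁻ _x in s, ENNReal.ofReal m ∂volume := by
          rw [setLIntegral_const]
      _ ≤ ∫⁻ x in s, ENNReal.ofReal (w x) ∂volume := by
          refine setLIntegral_mono_ae (hw.ennreal_ofReal.aemeasurable) ?_
          filter_upwards [hbound] with x hx _ using ENNReal.ofReal_le_ofReal hx.1
  · calc ∫⁻ x in s, ENNReal.ofReal (w x) ∂volume
        ≤ ∫⁻ _x in s, ENNReal.ofReal M ∂volume := by
          refine setLIntegral_mono_ae (measurable_const.aemeasurable) ?_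
          filter_upwards [hbound] with x hx _ using ENNReal.ofReal_le_ofReal hx.2
      _ = ENNReal.ofReal M * volume s := by rw [setLIntegral_const]

theorem vol_ball (hN : 0 < N) (x : EuclideanSpace ℝ (Fin N)) {r : ℝ} (hr : 0 ≤ r) :
    volume (ball x r) = ENNReal.ofReal (r ^ N) * volume (ball (0 : EuclideanSpace ℝ (Fin N)) 1) := by
  have : Nontrivial (EuclideanSpace ℝ (Fin N)) := by
    refine Module.nontrivial_of_finrank_pos (R := ℝ) ?_
    rw [finrank_euclideanSpace_fin]; exact hN
  rw [Measure.addHaar_ball volume x hr, finrank_euclideanSpace_fin]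

theorem vol_cball (hN : 0 < N) (x : EuclideanSpace ℝ (Fin N)) {r : ℝ} (hr : 0 ≤ r) :
    volume (closedBall x r) = ENNReal.ofReal (r ^ N) * volume (ball (0 : EuclideanSpace ℝ (Fin N)) 1) := by
  rw [Measure.addHaar_closedBall volume x hr, finrank_euclideanSpace_fin]


local notation "E" => EuclideanSpace ℝ (Fin N)

theorem cheb (ν : Measure E) {p : ℝ} (hp : 1 ≤ p) (g : E → ℝ) (hg : Measurable g)
    (hI : (∫⁻ x, ENNReal.ofReal (|g x| ^ p) ∂ν) ≠ ∞) {t : ℝ} (ht : 0 < t) :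
    ν {x | t ≤ |g x|} ≠ ∞ := by
  have hp0 : (0:ℝ) < p := lt_of_lt_of_le one_pos hp
  have h1 : ENNReal.ofReal (t ^ p) * ν {x | ENNReal.ofReal (t ^ p) ≤ ENNReal.ofReal (|g x| ^ p)}
      ≤ ∫⁻ x, ENNReal.ofReal (|g x| ^ p) ∂ν :=
    mul_meas_ge_le_lintegral₀ (((Real.continuous_rpow_const (lt_of_lt_of_le one_pos hp).le).measurable.comp hg.abs).ennreal_ofReal.aemeasurable) _
  have hsub : {x | t ≤ |g x|} ⊆ {x | ENNReal.ofReal (t ^ p) ≤ ENNReal.ofReal (|g x| ^ p)} := by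
    intro x hx
    exact ENNReal.ofReal_le_ofReal (Real.rpow_le_rpow ht.le hx hp0.le)
  intro htop
  have h2 : ν {x | ENNReal.ofReal (t ^ p) ≤ ENNReal.ofReal (|g x| ^ p)} = ∞ :=
    eq_top_mono (measure_mono hsub) htop
  rw [h2, ENNReal.mul_top] at h1
  · exact hI (eq_top_mono h1 rfl)
  · simp [ENNReal.ofReal_eq_zero, not_le, Real.rpow_pos_of_pos ht]

theorem upper_slice (hN : 0 < N) {p : ℝ} (hp : 1 ≤ p)
    (ν : Measure E) [SFinite ν] {M : ℝ}
    (hν : ∀ s : Set E, MeasurableSet s → ν s ≤ ENNReal.ofReal M * volume s)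
    (g : E → ℝ) (hg : Measurable g) {c lam : ℝ} (hc : 0 ≤ c) (hlam : 0 < lam) :
    ENNReal.ofReal (lam ^ p) *
      (ν.prod ν) {q : E × E | lam * dist q.1 q.2 ^ ((N:ℝ)/p) ≤ c * |g q.1|}
      ≤ ENNReal.ofReal (c ^ p * M) * volume (ball (0:E) 1) *
        ∫⁻ x, ENNReal.ofReal (|g x| ^ p) ∂ν := by
  have hp0 : (0:ℝ) < p := lt_of_lt_of_le one_pos hp
  have hnp : (0:ℝ) ≤ (N:ℝ)/p := div_nonneg (Nat.cast_nonneg N) hp0.le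
  set S : Set (E × E) := {q : E × E | lam * dist q.1 q.2 ^ ((N:ℝ)/p) ≤ c * |g q.1|} with hSdef
  have hSm : MeasurableSet S := by
    refine measurableSet_le ?_ ?_
    · exact (continuous_const.mul
        ((Real.continuous_rpow_const hnp).comp continuous_dist)).measurable
    · exact (hg.comp measurable_fst).abs.const_mul c
  have slice : ∀ x : E, Prod.mk x ⁻¹' S = closedBall x ((c * |g x| / lam) ^ (p/(N:ℝ))) := by
    intro x
    ext y
    simp only [hSdef, Set.mem_preimage, Set.mem_setOf_eq, mem_closedBall]
    rw [key_iff hp hN dist_nonneg (mul_nonneg hc (abs_nonneg _)) hlam, dist_comm]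
  set volB := volume (ball (0:E) 1) with hvolB
  set κ := ENNReal.ofReal M * ENNReal.ofReal ((c/lam) ^ p) * volB with hκ
  have hκtop : κ ≠ ∞ :=
    ENNReal.mul_ne_top (ENNReal.mul_ne_top ENNReal.ofReal_ne_top ENNReal.ofReal_ne_top)
      measure_ball_lt_top.ne
  have hpoint : ∀ x : E, ν (Prod.mk x ⁻¹' S) ≤ κ * ENNReal.ofReal (|g x| ^ p) := by
    intro x
    rw [slice x]
    have h0 : (0:ℝ) ≤ c * |g x| / lam :=
      div_nonneg (mul_nonneg hc (abs_nonneg _)) hlam.le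
    calc ν (closedBall x ((c * |g x| / lam) ^ (p/(N:ℝ))))
        ≤ ENNReal.ofReal M * volume (closedBall x ((c * |g x| / lam) ^ (p/(N:ℝ)))) :=
          hν _ measurableSet_closedBall
      _ = ENNReal.ofReal M * (ENNReal.ofReal ((c * |g x| / lam) ^ p) * volB) := by
          rw [vol_cball hN x (Real.rpow_nonneg h0 _), pow_id hp hN h0]
      _ = κ * ENNReal.ofReal (|g x| ^ p) := by
          have h1 : c * |g x| / lam = (c/lam) * |g x| := by ring
          rw [h1, Real.mul_rpow (div_nonneg hc hlam.le) (abs_nonneg _),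
            ENNReal.ofReal_mul (Real.rpow_nonneg (div_nonneg hc hlam.le) _), hκ]
          ring
  calc ENNReal.ofReal (lam ^ p) * (ν.prod ν) S
      = ENNReal.ofReal (lam ^ p) * ∫⁻ x, ν (Prod.mk x ⁻¹' S) ∂ν := by
        rw [Measure.prod_apply hSm]
    _ ≤ ENNReal.ofReal (lam ^ p) * ∫⁻ x, κ * ENNReal.ofReal (|g x| ^ p) ∂ν := by
        exact mul_le_mul_right (lintegral_mono hpoint) _
    _ = ENNReal.ofReal (lam ^ p) * κ * ∫⁻ x, ENNReal.ofReal (|g x| ^ p) ∂ν := by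
        rw [lintegral_const_mul' _ _ hκtop, hκ]; ring
    _ = ENNReal.ofReal (c ^ p * M) * volB * ∫⁻ x, ENNReal.ofReal (|g x| ^ p) ∂ν := by
        congr 1
        have h2 : ENNReal.ofReal (lam ^ p) * ENNReal.ofReal ((c/lam) ^ p)
            = ENNReal.ofReal (c ^ p) := by
          rw [← ENNReal.ofReal_mul (Real.rpow_nonneg hlam.le _),
            ← Real.mul_rpow hlam.le (div_nonneg hc hlam.le)]
          congr 2
          field_simp
        calc ENNReal.ofReal (lam ^ p) * κ
            = ENNReal.ofReal M * (ENNReal.ofReal (lam ^ p) * ENNReal.ofReal ((c/lam) ^ p)) * volB := by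
              rw [hκ]; ring
          _ = ENNReal.ofReal (c ^ p * M) * volB := by
              rw [h2, ENNReal.ofReal_mul (Real.rpow_nonneg hc _)]; ring

theorem lower_key (hN : 0 < N) {p : ℝ} (hp : 1 ≤ p)
    (ν : Measure E) [SFinite ν] {m : ℝ} (hm : 0 ≤ m)
    (hν : ∀ s : Set E, MeasurableSet s → ENNReal.ofReal m * volume s ≤ ν s)
    (g : E → ℝ) (hg : Measurable g)
    {ε δ lam : ℝ} (hε : 0 < ε) (hε1 : ε < 1) (hδ : 0 < δ) (hlam : 0 < lam) :
    ENNReal.ofReal ((1-ε) ^ p) * (2 * ENNReal.ofReal m * volume (ball (0:E) 1)) *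
      (∫⁻ x in {x : E | δ < |g x|}, ENNReal.ofReal (|g x| ^ p) ∂ν)
      ≤ ENNReal.ofReal (lam ^ p) *
          (ν.prod ν) {q : E × E | lam * dist q.1 q.2 ^ ((N:ℝ)/p) ≤ |g q.1 - g q.2|}
        + ENNReal.ofReal (lam ^ p) *
          (2 * (ν {x : E | ε * δ ≤ |g x|} * ν {x : E | δ < |g x|})) := by
  have hp0 : (0:ℝ) < p := lt_of_lt_of_le one_pos hp
  have h1ε : (0:ℝ) ≤ 1 - ε := by linarith
  have hpn : (0:ℝ) ≤ p / (N:ℝ) := div_nonneg hp0.le (Nat.cast_nonneg N)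
  set R : E → ℝ := fun x => ((1-ε) * |g x| / lam) ^ (p/(N:ℝ)) with hRdef
  have hRm : Measurable R :=
    (Real.continuous_rpow_const hpn).measurable.comp ((hg.abs.const_mul (1-ε)).div_const lam)
  set Aδ : Set E := {x : E | δ < |g x|} with hAδdef
  have hAδm : MeasurableSet Aδ := measurableSet_lt measurable_const hg.abs
  set volB := volume (ball (0:E) 1) with hvolB
  set D : Set (E × E) := {q : E × E | δ < |g q.1| ∧ |g q.2| ≤ ε * |g q.1| ∧
      dist q.1 q.2 ≤ R q.1} with hDdef
  have hDm : MeasurableSet D := by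
    refine MeasurableSet.inter ?_ (MeasurableSet.inter ?_ ?_)
    · exact measurableSet_lt measurable_const (hg.abs.comp measurable_fst)
    · exact measurableSet_le (hg.abs.comp measurable_snd)
        ((hg.abs.comp measurable_fst).const_mul ε)
    · exact measurableSet_le continuous_dist.measurable (hRm.comp measurable_fst)
  set Eg : Set (E × E) :=
    {q : E × E | lam * dist q.1 q.2 ^ ((N:ℝ)/p) ≤ |g q.1 - g q.2|} with hEgdef
  have hDE : D ⊆ Eg := by
    rintro ⟨x, y⟩ ⟨h1, h2, h3⟩
    have hkey : lam * dist x y ^ ((N:ℝ)/p) ≤ (1-ε) * |g x| :=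
      (key_iff hp hN dist_nonneg (mul_nonneg h1ε (abs_nonneg _)) hlam).mpr h3
    have habs : |g x| - |g y| ≤ |g x - g y| := abs_sub_abs_le_abs_sub _ _
    show lam * dist x y ^ ((N:ℝ)/p) ≤ |g x - g y|
    nlinarith [abs_nonneg (g x)]
  have hD'E : Prod.swap ⁻¹' D ⊆ Eg := by
    rintro ⟨x, y⟩ h
    have := hDE h
    show lam * dist x y ^ ((N:ℝ)/p) ≤ |g x - g y|
    rw [dist_comm, abs_sub_comm]
    exact this
  have hdisj : Disjoint D (Prod.swap ⁻¹' D) := by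
    rw [Set.disjoint_left]
    rintro ⟨x, y⟩ ⟨h1, h2, -⟩ ⟨h1', h2', -⟩
    have h5 := mul_le_mul_of_nonneg_left h2' hε.le
    have hy0 : 0 < |g y| := lt_trans hδ h1'
    have h3 : |g y| ≤ ε * (ε * |g y|) := le_trans h2 h5
    have h4 : 0 < (1-ε) * ((1+ε) * |g y|) :=
      mul_pos (by linarith) (mul_pos (by linarith) hy0)
    nlinarith
  have hswapm : MeasurableSet (Prod.swap ⁻¹' D) := hDm.preimage measurable_swap
  have hDD' : (ν.prod ν) (Prod.swap ⁻¹' D) = (ν.prod ν) D := by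
    rw [← Measure.map_apply measurable_swap hDm, Measure.prod_swap]
  have h2D : 2 * (ν.prod ν) D ≤ (ν.prod ν) Eg := by
    calc 2 * (ν.prod ν) D = (ν.prod ν) D + (ν.prod ν) (Prod.swap ⁻¹' D) := by
          rw [hDD', two_mul]
      _ = (ν.prod ν) (D ∪ Prod.swap ⁻¹' D) := (measure_union hdisj hswapm).symm
      _ ≤ (ν.prod ν) Eg := measure_mono (Set.union_subset hDE hD'E)
  set T0 := ν {x : E | ε * δ ≤ |g x|} with hT0
  set κm := ENNReal.ofReal m * (ENNReal.ofReal (((1-ε)/lam) ^ p) * volB) with hκm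
  have hκtop : κm ≠ ∞ :=
    ENNReal.mul_ne_top ENNReal.ofReal_ne_top
      (ENNReal.mul_ne_top ENNReal.ofReal_ne_top measure_ball_lt_top.ne)
  have hpoint : ∀ x ∈ Aδ, κm * ENNReal.ofReal (|g x| ^ p) ≤ ν (Prod.mk x ⁻¹' D) + T0 := by
    intro x hx
    have hgx : δ < |g x| := hx
    have h0 : (0:ℝ) ≤ (1-ε) * |g x| / lam := div_nonneg (mul_nonneg h1ε (abs_nonneg _)) hlam.le
    have heq : κm * ENNReal.ofReal (|g x| ^ p) = ENNReal.ofReal m * volume (closedBall x (R x)) := by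
      rw [hRdef]
      rw [vol_cball hN x (Real.rpow_nonneg h0 _), pow_id hp hN h0]
      have h1 : (1-ε) * |g x| / lam = ((1-ε)/lam) * |g x| := by ring
      rw [h1, Real.mul_rpow (div_nonneg h1ε hlam.le) (abs_nonneg _),
        ENNReal.ofReal_mul (Real.rpow_nonneg (div_nonneg h1ε hlam.le) _), hκm]
      ring
    rw [heq]
    refine le_trans (hν _ measurableSet_closedBall) ?_
    refine le_trans (measure_mono (?_ : closedBall x (R x) ⊆
      (Prod.mk x ⁻¹' D) ∪ {y : E | ε * δ ≤ |g y|})) (measure_union_le _ _)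
    intro y hy
    rw [mem_closedBall] at hy
    by_cases hc : |g y| ≤ ε * |g x|
    · left
      exact ⟨hgx, hc, by rwa [dist_comm]⟩
    · right
      push_neg at hc
      have : ε * δ ≤ ε * |g x| := mul_le_mul_of_nonneg_left hgx.le hε.le
      exact le_trans this hc.le
  have hmain : κm * (∫⁻ x in Aδ, ENNReal.ofReal (|g x| ^ p) ∂ν) ≤ (ν.prod ν) D + T0 * ν Aδ := by
    calc κm * (∫⁻ x in Aδ, ENNReal.ofReal (|g x| ^ p) ∂ν)
        = ∫⁻ x in Aδ, κm * ENNReal.ofReal (|g x| ^ p) ∂ν := by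
          rw [lintegral_const_mul' _ _ hκtop]
      _ ≤ ∫⁻ x in Aδ, (ν (Prod.mk x ⁻¹' D) + T0) ∂ν :=
          setLIntegral_mono ((measurable_measure_prodMk_left hDm).add measurable_const) hpoint
      _ = (∫⁻ x in Aδ, ν (Prod.mk x ⁻¹' D) ∂ν) + T0 * ν Aδ := by
          rw [lintegral_add_right _ measurable_const, setLIntegral_const]
      _ ≤ (∫⁻ x, ν (Prod.mk x ⁻¹' D) ∂ν) + T0 * ν Aδ :=
          add_le_add_left (setLIntegral_le_lintegral _ _) _
      _ = (ν.prod ν) D + T0 * ν Aδ := by rw [Measure.prod_apply hDm]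
  have hofReal_eq : ENNReal.ofReal (lam ^ p) * ENNReal.ofReal (((1-ε)/lam) ^ p)
      = ENNReal.ofReal ((1-ε) ^ p) := by
    rw [← ENNReal.ofReal_mul (Real.rpow_nonneg hlam.le _),
      ← Real.mul_rpow hlam.le (div_nonneg h1ε hlam.le)]
    congr 2
    field_simp
  calc ENNReal.ofReal ((1-ε) ^ p) * (2 * ENNReal.ofReal m * volB) *
      (∫⁻ x in Aδ, ENNReal.ofReal (|g x| ^ p) ∂ν)
      = ENNReal.ofReal (lam ^ p) *
        (2 * (κm * (∫⁻ x in Aδ, ENNReal.ofReal (|g x| ^ p) ∂ν))) := by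
        rw [← hofReal_eq, hκm]; ring
    _ ≤ ENNReal.ofReal (lam ^ p) * (2 * ((ν.prod ν) D + T0 * ν Aδ)) :=
        mul_le_mul_right (mul_le_mul_right hmain 2) _
    _ = ENNReal.ofReal (lam ^ p) * (2 * (ν.prod ν) D)
        + ENNReal.ofReal (lam ^ p) * (2 * (T0 * ν Aδ)) := by ring
    _ ≤ ENNReal.ofReal (lam ^ p) * (ν.prod ν) Eg
        + ENNReal.ofReal (lam ^ p) * (2 * (T0 * ν Aδ)) :=
        add_le_add_left (mul_le_mul_right h2D _) _

theorem weighted_euclidean_bounded_weight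
    (N : ℕ) (hN : 0 < N)
    (w : EuclideanSpace ℝ (Fin N) → ℝ) (hw : Measurable w)
    (m M : ℝ) (hm : 0 < m) (hmM : m ≤ M)
    (hbound : ∀ᵐ x ∂(volume : Measure (EuclideanSpace ℝ (Fin N))), m ≤ w x ∧ w x ≤ M)
    (p : ℝ) (hp : 1 ≤ p)
    (u : EuclideanSpace ℝ (Fin N) → ℝ)
    (hu : MemLp u (ENNReal.ofReal p)
      (volume.withDensity fun x => ENNReal.ofReal (w x))) :
    (∀ (x : EuclideanSpace ℝ (Fin N)) (r : ℝ), 0 < r →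
      ENNReal.ofReal (m * (volume (ball (0 : EuclideanSpace ℝ (Fin N)) 1)).toReal *
          r ^ (N : ℝ)) ≤
        (volume.withDensity fun x => ENNReal.ofReal (w x)) (ball x r) ∧
      (volume.withDensity fun x => ENNReal.ofReal (w x)) (ball x r) ≤
        ENNReal.ofReal (M * (volume (ball (0 : EuclideanSpace ℝ (Fin N)) 1)).toReal *
          r ^ (N : ℝ))) ∧
    (ENNReal.ofReal (2 * m * (volume (ball (0 : EuclideanSpace ℝ (Fin N)) 1)).toReal) *
        ∫⁻ x, ENNReal.ofReal (|u x| ^ p)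
          ∂(volume.withDensity fun x => ENNReal.ofReal (w x)) ≤
      ⨆ lam > (0 : ℝ), ENNReal.ofReal (lam ^ p) *
        ((volume.withDensity fun x => ENNReal.ofReal (w x)).prod
          (volume.withDensity fun x => ENNReal.ofReal (w x)))
          {q : EuclideanSpace ℝ (Fin N) × EuclideanSpace ℝ (Fin N) |
            lam * dist q.1 q.2 ^ ((N : ℝ) / p) ≤ |u q.1 - u q.2|}) ∧
    ((⨆ lam > (0 : ℝ), ENNReal.ofReal (lam ^ p) *
        ((volume.withDensity fun x => ENNReal.ofReal (w x)).prod
          (volume.withDensity fun x => ENNReal.ofReal (w x)))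
          {q : EuclideanSpace ℝ (Fin N) × EuclideanSpace ℝ (Fin N) |
            lam * dist q.1 q.2 ^ ((N : ℝ) / p) ≤ |u q.1 - u q.2|}) ≤
      ENNReal.ofReal ((2 : ℝ) ^ (p + 1) * M *
          (volume (ball (0 : EuclideanSpace ℝ (Fin N)) 1)).toReal) *
        ∫⁻ x, ENNReal.ofReal (|u x| ^ p)
          ∂(volume.withDensity fun x => ENNReal.ofReal (w x))) := by
  have hp0 : (0:ℝ) < p := lt_of_lt_of_le one_pos hp
  set ν : Measure (EuclideanSpace ℝ (Fin N)) :=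
    volume.withDensity fun x => ENNReal.ofReal (w x) with hνdef
  haveI : SFinite ν :=
    inferInstanceAs (SFinite (volume.withDensity fun x => ENNReal.ofReal (w x)))
  set volB := volume (ball (0 : EuclideanSpace ℝ (Fin N)) 1) with hvolB
  have hvolBtop : volB ≠ ∞ := measure_ball_lt_top.ne
  have hωnn : (0:ℝ) ≤ volB.toReal := ENNReal.toReal_nonneg
  have hofω : ENNReal.ofReal volB.toReal = volB := ENNReal.ofReal_toReal hvolBtop
  have hM0 : (0:ℝ) ≤ M := le_trans hm.le hmM
  have hνle : ∀ s : Set (EuclideanSpace ℝ (Fin N)), MeasurableSet s →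
      ν s ≤ ENNReal.ofReal M * volume s :=
    fun s hs => (nu_bounds hN w hw m M hm hbound hs).2
  have hνge : ∀ s : Set (EuclideanSpace ℝ (Fin N)), MeasurableSet s →
      ENNReal.ofReal m * volume s ≤ ν s :=
    fun s hs => (nu_bounds hN w hw m M hm hbound hs).1
  -- measurable representative of u
  have hae : AEMeasurable u ν := hu.aestronglyMeasurable.aemeasurable
  set g : EuclideanSpace ℝ (Fin N) → ℝ := hae.mk u with hgdef
  have hgm : Measurable g := hae.measurable_mk
  have hug : u =ᵐ[ν] g := hae.ae_eq_mk
  have hIg : (∫⁻ x, ENNReal.ofReal (|g x| ^ p) ∂ν) = ∫⁻ x, ENNReal.ofReal (|u x| ^ p) ∂ν := by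
    refine lintegral_congr_ae ?_
    filter_upwards [hug] with x h
    rw [h]
  -- finiteness of the L^p integral
  have hIfin : (∫⁻ x, ENNReal.ofReal (|u x| ^ p) ∂ν) ≠ ∞ := by
    have h1 : ∀ x, ENNReal.ofReal (|u x| ^ p) = (‖u x‖₊ : ℝ≥0∞) ^ p := by
      intro x
      rw [← Real.norm_eq_abs, ← ENNReal.ofReal_rpow_of_nonneg (norm_nonneg _) hp0.le,
        ofReal_norm, enorm_eq_nnnorm]
    have h2 := lintegral_rpow_enorm_lt_top_of_eLpNorm_lt_top
      (f := u) (μ := ν) (p := ENNReal.ofReal p)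
      (by simp [ENNReal.ofReal_eq_zero, not_le, hp0]) ENNReal.ofReal_ne_top hu.eLpNorm_lt_top
    rw [ENNReal.toReal_ofReal hp0.le] at h2
    simp only [h1]
    exact h2.ne
  -- comparison of u-sets and g-sets under the product measure
  have hnull : (ν.prod ν) {q : EuclideanSpace ℝ (Fin N) × EuclideanSpace ℝ (Fin N) |
      ¬(u q.1 = g q.1 ∧ u q.2 = g q.2)} = 0 := by
    have hB : ν {x | ¬ u x = g x} = 0 := ae_iff.mp hug
    have hU1 : (ν.prod ν) (({x | ¬ u x = g x} ×ˢ Set.univ) ∪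
        (Set.univ ×ˢ {x | ¬ u x = g x})) = 0 := by
      refine measure_union_null ?_ ?_
      · rw [Measure.prod_prod, hB, zero_mul]
      · rw [Measure.prod_prod, hB, mul_zero]
    refine measure_mono_null (fun q hq => ?_) hU1
    simp only [Set.mem_setOf_eq, not_and_or] at hq
    rcases hq with h | h
    · exact Or.inl ⟨h, Set.mem_univ _⟩
    · exact Or.inr ⟨Set.mem_univ _, h⟩
  have hkey : ∀ lam : ℝ,
      (ν.prod ν) {q : EuclideanSpace ℝ (Fin N) × EuclideanSpace ℝ (Fin N) |
        lam * dist q.1 q.2 ^ ((N : ℝ) / p) ≤ |u q.1 - u q.2|}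
      = (ν.prod ν) {q : EuclideanSpace ℝ (Fin N) × EuclideanSpace ℝ (Fin N) |
        lam * dist q.1 q.2 ^ ((N : ℝ) / p) ≤ |g q.1 - g q.2|} := by
    intro lam
    apply measure_congr
    have hae2 : ∀ᵐ q ∂(ν.prod ν), u q.1 = g q.1 ∧ u q.2 = g q.2 := by
      rw [ae_iff]; exact hnull
    filter_upwards [hae2] with q hq
    show (q ∈ {q : EuclideanSpace ℝ (Fin N) × EuclideanSpace ℝ (Fin N) |
        lam * dist q.1 q.2 ^ ((N : ℝ) / p) ≤ |u q.1 - u q.2|})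
      = (q ∈ {q : EuclideanSpace ℝ (Fin N) × EuclideanSpace ℝ (Fin N) |
        lam * dist q.1 q.2 ^ ((N : ℝ) / p) ≤ |g q.1 - g q.2|})
    simp only [Set.mem_setOf_eq, hq.1, hq.2]
  have hIgfin : (∫⁻ x, ENNReal.ofReal (|g x| ^ p) ∂ν) ≠ ∞ := by rw [hIg]; exact hIfin
  refine ⟨?_, ?_, ?_⟩
  -- Part 1 : Ahlfors regularity
  · intro x r hr
    have hvol : volume (ball x r) = ENNReal.ofReal (r ^ N) * volB := vol_ball hN x hr.le
    have hr' : r ^ (N:ℝ) = r ^ N := Real.rpow_natCast r N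
    constructor
    · calc ENNReal.ofReal (m * volB.toReal * r ^ (N:ℝ))
          = ENNReal.ofReal m * volume (ball x r) := by
            rw [hr', hvol, ENNReal.ofReal_mul (mul_nonneg hm.le hωnn),
              ENNReal.ofReal_mul hm.le, hofω]
            ring
        _ ≤ ν (ball x r) := hνge _ measurableSet_ball
    · calc ν (ball x r) ≤ ENNReal.ofReal M * volume (ball x r) := hνle _ measurableSet_ball
        _ = ENNReal.ofReal (M * volB.toReal * r ^ (N:ℝ)) := by
            rw [hr', hvol, ENNReal.ofReal_mul (mul_nonneg hM0 hωnn),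
              ENNReal.ofReal_mul hM0, hofω]
            ring
  -- Part 2 : lower bound
  · set S := ⨆ lam > (0 : ℝ), ENNReal.ofReal (lam ^ p) *
        (ν.prod ν) {q : EuclideanSpace ℝ (Fin N) × EuclideanSpace ℝ (Fin N) |
          lam * dist q.1 q.2 ^ ((N : ℝ) / p) ≤ |u q.1 - u q.2|} with hSdef
    have hle : ∀ lam : ℝ, 0 < lam → ENNReal.ofReal (lam ^ p) *
        (ν.prod ν) {q : EuclideanSpace ℝ (Fin N) × EuclideanSpace ℝ (Fin N) |
          lam * dist q.1 q.2 ^ ((N : ℝ) / p) ≤ |u q.1 - u q.2|} ≤ S := by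
      intro lam hlam
      rw [hSdef]
      exact le_iSup₂ (f := fun (lam : ℝ) (_ : lam > 0) => ENNReal.ofReal (lam ^ p) *
        (ν.prod ν) {q : EuclideanSpace ℝ (Fin N) × EuclideanSpace ℝ (Fin N) |
          lam * dist q.1 q.2 ^ ((N : ℝ) / p) ≤ |u q.1 - u q.2|}) lam hlam
    set Cm : ℝ≥0∞ := 2 * ENNReal.ofReal m * volB with hCmdef
    set μg : Measure (EuclideanSpace ℝ (Fin N)) :=
      ν.withDensity (fun x => ENNReal.ofReal (|g x| ^ p)) with hμgdef
    have step1 : ∀ ε δ : ℝ, 0 < ε → ε < 1 → 0 < δ →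
        ENNReal.ofReal ((1-ε) ^ p) * Cm * (μg {x | δ < |g x|}) ≤ S := by
      intro ε δ hε hε1 hδ
      have hAδm : MeasurableSet {x : EuclideanSpace ℝ (Fin N) | δ < |g x|} :=
        measurableSet_lt measurable_const hgm.abs
      have hμgA : μg {x | δ < |g x|}
          = ∫⁻ x in {x | δ < |g x|}, ENNReal.ofReal (|g x| ^ p) ∂ν :=
        withDensity_apply _ hAδm
      have hT0fin : ν {x | ε * δ ≤ |g x|} ≠ ∞ := cheb ν hp g hgm hIgfin (mul_pos hε hδ)
      have hAfin : ν {x | δ < |g x|} ≠ ∞ := by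
        have h1 : ν {x | δ < |g x|} ≤ ν {x | δ ≤ |g x|} :=
          measure_mono (fun x hx => (le_of_lt hx : δ ≤ |g x|))
        exact (lt_of_le_of_lt h1 (lt_top_iff_ne_top.mpr (cheb ν hp g hgm hIgfin hδ))).ne
      set K := 2 * (ν {x | ε * δ ≤ |g x|} * ν {x | δ < |g x|}) with hKdef
      have hKfin : K ≠ ∞ := by
        rw [hKdef]
        exact ENNReal.mul_ne_top (by simp) (ENNReal.mul_ne_top hT0fin hAfin)
      refine ENNReal.le_of_forall_pos_le_add fun η hη _ => ?_
      set x0 : ℝ := min ((η:ℝ)/(K.toReal+1)) 1 with hx0def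
      have hx0 : 0 < x0 := lt_min (div_pos (by exact_mod_cast hη) (by positivity)) one_pos
      set lam := x0 ^ (1/p) with hlamdef
      have hlam : 0 < lam := Real.rpow_pos_of_pos hx0 _
      have hlamp : lam ^ p = x0 := by
        rw [hlamdef, ← Real.rpow_mul hx0.le, one_div, inv_mul_cancel₀ hp0.ne', Real.rpow_one]
      have hbound2 : ENNReal.ofReal (lam ^ p) * K ≤ (η : ℝ≥0∞) := by
        rw [hlamp, ← ENNReal.ofReal_toReal hKfin, ← ENNReal.ofReal_mul hx0.le]
        have hxK : x0 * K.toReal ≤ (η:ℝ) := by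
          have h1 : x0 ≤ (η:ℝ)/(K.toReal+1) := min_le_left _ _
          have h2 : x0 * K.toReal ≤ ((η:ℝ)/(K.toReal+1)) * (K.toReal+1) := by
            refine mul_le_mul h1 (by linarith) ENNReal.toReal_nonneg ?_
            positivity
          rwa [div_mul_cancel₀ _ (by positivity : K.toReal + 1 ≠ 0)] at h2
        calc ENNReal.ofReal (x0 * K.toReal) ≤ ENNReal.ofReal ((η:ℝ)) :=
              ENNReal.ofReal_le_ofReal hxK
          _ = (η : ℝ≥0∞) := ENNReal.ofReal_coe_nnreal
      have hmain := lower_key hN hp ν hm.le hνge g hgm hε hε1 hδ hlam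
      rw [← hkey lam] at hmain
      calc ENNReal.ofReal ((1-ε) ^ p) * Cm * (μg {x | δ < |g x|})
          = ENNReal.ofReal ((1-ε) ^ p) * (2 * ENNReal.ofReal m * volB) *
            (∫⁻ x in {x | δ < |g x|}, ENNReal.ofReal (|g x| ^ p) ∂ν) := by
            rw [hμgA, hCmdef]
        _ ≤ ENNReal.ofReal (lam ^ p) *
              (ν.prod ν) {q : EuclideanSpace ℝ (Fin N) × EuclideanSpace ℝ (Fin N) |
                lam * dist q.1 q.2 ^ ((N : ℝ) / p) ≤ |u q.1 - u q.2|}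
            + ENNReal.ofReal (lam ^ p) * K := hmain
        _ ≤ S + (η : ℝ≥0∞) := add_le_add (hle lam hlam) hbound2
    -- let δ → 0
    have hmono : Monotone (fun n : ℕ => {x : EuclideanSpace ℝ (Fin N) |
        1/((n:ℝ)+1) < |g x|}) := by
      intro a b hab x hx
      simp only [Set.mem_setOf_eq] at hx ⊢
      refine lt_of_le_of_lt ?_ hx
      have : (a:ℝ) + 1 ≤ (b:ℝ) + 1 := by exact_mod_cast Nat.succ_le_succ hab
      exact one_div_le_one_div_of_le (by positivity) this
    have hUnion : (⋃ n : ℕ, {x : EuclideanSpace ℝ (Fin N) | 1/((n:ℝ)+1) < |g x|})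
        = {x : EuclideanSpace ℝ (Fin N) | 0 < |g x|} := by
      ext x
      simp only [Set.mem_iUnion, Set.mem_setOf_eq]
      constructor
      · rintro ⟨n, hn⟩; exact lt_trans (by positivity) hn
      · intro hx; exact exists_nat_one_div_lt hx
    have hsm : MeasurableSet {x : EuclideanSpace ℝ (Fin N) | 0 < |g x|} :=
      measurableSet_lt measurable_const hgm.abs
    have hμgU : μg {x : EuclideanSpace ℝ (Fin N) | 0 < |g x|}
        = ∫⁻ x, ENNReal.ofReal (|u x| ^ p) ∂ν := by
      have h0 : μg ({x : EuclideanSpace ℝ (Fin N) | 0 < |g x|}ᶜ) = 0 := by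
        rw [hμgdef, withDensity_apply _ hsm.compl]
        have hzero : (∫⁻ x in {x : EuclideanSpace ℝ (Fin N) | 0 < |g x|}ᶜ,
            ENNReal.ofReal (|g x| ^ p) ∂ν)
            = ∫⁻ _x in {x : EuclideanSpace ℝ (Fin N) | 0 < |g x|}ᶜ, (0:ℝ≥0∞) ∂ν := by
          refine setLIntegral_congr_fun hsm.compl (fun x hx => ?_)
          have hx' : ¬ 0 < |g x| := hx
          have hx0 : |g x| = 0 := le_antisymm (not_lt.mp hx') (abs_nonneg _)
          rw [hx0, Real.zero_rpow hp0.ne', ENNReal.ofReal_zero]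
        rw [hzero, lintegral_zero]
      have hadd := measure_add_measure_compl (μ := μg) hsm
      rw [h0, add_zero] at hadd
      rw [hadd, hμgdef, withDensity_apply _ MeasurableSet.univ, Measure.restrict_univ, hIg]
    have step2 : ∀ ε : ℝ, 0 < ε → ε < 1 →
        ENNReal.ofReal ((1-ε) ^ p) * Cm * (∫⁻ x, ENNReal.ofReal (|u x| ^ p) ∂ν) ≤ S := by
      intro ε hε hε1
      rw [← hμgU, ← hUnion, Directed.measure_iUnion (hmono.directed_le), ENNReal.mul_iSup]
      exact iSup_le fun n => step1 ε (1/((n:ℝ)+1)) hε hε1 (by positivity)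
    -- let ε → 0
    have hCm : ENNReal.ofReal (2 * m * volB.toReal) = Cm := by
      rw [hCmdef, ENNReal.ofReal_mul (by positivity : (0:ℝ) ≤ 2 * m),
        ENNReal.ofReal_mul (by norm_num : (0:ℝ) ≤ 2), hofω, ENNReal.ofReal_ofNat]
    rw [hCm]
    refine ENNReal.le_of_forall_lt_one_mul_le fun a ha => ?_
    rcases eq_or_ne a 0 with rfl | ha0
    · simp
    · have hat : a ≠ ∞ := ha.ne_top
      have ht0 : 0 < a.toReal := ENNReal.toReal_pos ha0 hat
      have ht1 : a.toReal < 1 := by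
        have := ENNReal.toReal_strict_mono (by simp) ha
        simpa using this
      have h1 : a.toReal ^ (1/p) < 1 := Real.rpow_lt_one ht0.le ht1 (by positivity)
      have h2 : 0 < a.toReal ^ (1/p) := Real.rpow_pos_of_pos ht0 _
      have h4 : (1 - (1 - a.toReal ^ (1/p))) ^ p = a.toReal := by
        rw [_root_.sub_sub_cancel, ← Real.rpow_mul ht0.le, one_div, inv_mul_cancel₀ hp0.ne',
          Real.rpow_one]
      have h5 := step2 (1 - a.toReal ^ (1/p)) (by linarith) (by linarith)
      rw [h4, ENNReal.ofReal_toReal hat] at h5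
      rwa [← mul_assoc]
  -- Part 3 : upper bound
  · refine iSup₂_le fun lam hlam => ?_
    rw [hkey lam]
    have hlam' : (0:ℝ) < lam := hlam
    have hnp : (0:ℝ) ≤ (N:ℝ)/p := div_nonneg (Nat.cast_nonneg N) hp0.le
    set Ag : Set (EuclideanSpace ℝ (Fin N) × EuclideanSpace ℝ (Fin N)) :=
      {q | lam * dist q.1 q.2 ^ ((N:ℝ)/p) ≤ 2 * |g q.1|} with hAgdef
    set Bg : Set (EuclideanSpace ℝ (Fin N) × EuclideanSpace ℝ (Fin N)) :=
      {q | lam * dist q.1 q.2 ^ ((N:ℝ)/p) ≤ 2 * |g q.2|} with hBgdef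
    have hAgm : MeasurableSet Ag := by
      refine measurableSet_le ?_ ?_
      · exact (continuous_const.mul
          ((Real.continuous_rpow_const hnp).comp continuous_dist)).measurable
      · exact (hgm.comp measurable_fst).abs.const_mul 2
    have hsub : {q : EuclideanSpace ℝ (Fin N) × EuclideanSpace ℝ (Fin N) |
        lam * dist q.1 q.2 ^ ((N : ℝ) / p) ≤ |g q.1 - g q.2|} ⊆ Ag ∪ Bg := by
      rintro ⟨x, y⟩ hq
      simp only [Set.mem_setOf_eq] at hq
      have habs : |g x - g y| ≤ |g x| + |g y| := abs_sub _ _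
      rcases le_total (|g x|) (|g y|) with h | h
      · right
        show lam * dist x y ^ ((N:ℝ)/p) ≤ 2 * |g y|
        linarith
      · left
        show lam * dist x y ^ ((N:ℝ)/p) ≤ 2 * |g x|
        linarith
    have hBA : (ν.prod ν) Bg = (ν.prod ν) Ag := by
      have hset : Bg = Prod.swap ⁻¹' Ag := by
        ext ⟨x, y⟩
        simp only [hBgdef, hAgdef, Set.mem_setOf_eq, Set.mem_preimage, Prod.swap_prod_mk]
        rw [dist_comm]
      rw [hset, ← Measure.map_apply measurable_swap hAgm, Measure.prod_swap]
    have hup := upper_slice hN hp ν hνle g hgm (c := 2) (by norm_num) hlam'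
    calc ENNReal.ofReal (lam ^ p) *
        (ν.prod ν) {q : EuclideanSpace ℝ (Fin N) × EuclideanSpace ℝ (Fin N) |
          lam * dist q.1 q.2 ^ ((N : ℝ) / p) ≤ |g q.1 - g q.2|}
        ≤ ENNReal.ofReal (lam ^ p) * ((ν.prod ν) Ag + (ν.prod ν) Bg) :=
          mul_le_mul_right (le_trans (measure_mono hsub) (measure_union_le _ _)) _
      _ = ENNReal.ofReal (lam ^ p) * (ν.prod ν) Ag
          + ENNReal.ofReal (lam ^ p) * (ν.prod ν) Ag := by rw [hBA]; ring
      _ ≤ ENNReal.ofReal ((2:ℝ) ^ p * M) * volB * (∫⁻ x, ENNReal.ofReal (|g x| ^ p) ∂ν)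
          + ENNReal.ofReal ((2:ℝ) ^ p * M) * volB * (∫⁻ x, ENNReal.ofReal (|g x| ^ p) ∂ν) :=
          add_le_add hup hup
      _ = ENNReal.ofReal ((2:ℝ) ^ (p + 1) * M * volB.toReal) *
          (∫⁻ x, ENNReal.ofReal (|u x| ^ p) ∂ν) := by
          rw [hIg]
          have h2p : (2:ℝ) ^ (p+1) = (2:ℝ) ^ p * 2 := by
            rw [Real.rpow_add (by norm_num : (0:ℝ) < 2), Real.rpow_one]
          have h2pn : (0:ℝ) ≤ (2:ℝ) ^ p := Real.rpow_nonneg (by norm_num) _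
          have hsc : (2:ℝ) ^ (p+1) * M * volB.toReal
              = ((2:ℝ) ^ p * M) * (2 * volB.toReal) := by rw [h2p]; ring
          rw [hsc, ENNReal.ofReal_mul (mul_nonneg h2pn hM0),
            ENNReal.ofReal_mul (by norm_num : (0:ℝ) ≤ 2), hofω, ENNReal.ofReal_ofNat]
          ring
end
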